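/- arXiv:1212.1423 — 5 statements merged into one kernel-verified Lean document; each statement's English description precedes it below -/
import Mathlib

section
/- Let n ≥ 1, 1 < p ≤ q < ∞ with p' = p/(p-1), let v, w be weights on ℝⁿ, and let α ∈ (0,1). Suppose A(α) := sup_{t>0} (∫_{|y|<t} v(y)^{-p'} dy)^{α/p'} · (∫_{|x|>t} [ (∫_{|y|<|x|} v(y)^{-p'} dy)^{(1-α)/p'} · w(x) ]^q dx)^{1/q} < ∞. Then for every measurable f ≥ 0 one has (∫_{ℝⁿ} (Hf(x) · w(x))^q dx)^{1/q} ≤ (1-α)^{-1/p'} · A(α) · (∫_{ℝⁿ} (f(x) · v(x))^p dx)^{1/p}. -/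
/-!
Write `U(x) = ∫_{|y|<|x|} v^{-p'}`. Hölder's inequality with the weight `v U^{α/p'}` gives
`Hf(x) ≤ (1-α)^{-1/p'} U(x)^{(1-α)/p'} (H[(f v U^{α/p'})^p](x))^{1/p}`, because
`∫_{|y|<t} v^{-p'} U^{-α} ≤ U(t)^{1-α} / (1-α)`: by the layer-cake formula this is
`∫ F^{-α} dF ≤ ∫_0^{F(t)} s^{-α} ds` for the distribution function `F(r) = ∫_{|y|<r} v^{-p'}`,
which is continuous since spheres are null. Raising to the power `q`, Minkowski's integral
inequality with exponent `q/p ≥ 1` moves the `x`-integral inside, where the factor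
`U(|y|)^{α/p'} (∫_{|x|>|y|} (U^{(1-α)/p'} w)^q)^{1/q}` is at most `A(α)`.
-/

open MeasureTheory ENNReal Metric Set Function

section Minkowski

variable {X Y : Type*} [MeasurableSpace X] [MeasurableSpace Y] {μ : Measure X} {ν : Measure Y}

theorem lintegral_Lp_le_of_le_lintegral [SFinite μ] [SFinite ν] {F : X → Y → ℝ≥0∞}
    (hF : Measurable (uncurry F)) {r : ℝ} (hr : 1 < r) {g : X → ℝ≥0∞} (hg : Measurable g)
    (hgF : ∀ x, g x ≤ ∫⁻ y, F x y ∂ν) (hfin : ∫⁻ x, g x ^ r ∂μ ≠ ⊤) :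
    (∫⁻ x, g x ^ r ∂μ) ^ (1 / r) ≤ ∫⁻ y, (∫⁻ x, F x y ^ r ∂μ) ^ (1 / r) ∂ν := by
  -- Split `g ^ r = g ^ (r - 1) * g`, swap the integrals and apply Hölder in `x`; the factor
  -- `I ^ (1 / r')` then cancels since `I < ⊤`.
  set I := ∫⁻ x, g x ^ r ∂μ
  have hr' := Real.HolderConjugate.conjExponent hr
  set r' := r.conjExponent
  have hIr' : I ^ (1 / r') ≠ ⊤ := rpow_ne_top_of_nonneg hr'.symm.one_div_nonneg hfin
  have key : I ≤ I ^ (1 / r') * ∫⁻ y, (∫⁻ x, F x y ^ r ∂μ) ^ (1 / r) ∂ν := calc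
    I = ∫⁻ x, g x ^ (r - 1) * g x ∂μ := lintegral_congr fun x => by
        conv_lhs => rw [← sub_add_cancel r 1,
          ENNReal.rpow_add_of_nonneg _ _ hr'.sub_one_pos.le zero_le_one, ENNReal.rpow_one]
    _ ≤ ∫⁻ x, g x ^ (r - 1) * ∫⁻ y, F x y ∂ν ∂μ := by gcongr with x; exact hgF x
    _ = ∫⁻ x, ∫⁻ y, g x ^ (r - 1) * F x y ∂ν ∂μ := lintegral_congr fun x =>
        (lintegral_const_mul _ (hF.comp measurable_prodMk_left)).symm
    _ = ∫⁻ y, ∫⁻ x, g x ^ (r - 1) * F x y ∂μ ∂ν :=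
        lintegral_lintegral_swap (((hg.pow_const _).comp measurable_fst).mul hF).aemeasurable
    _ ≤ ∫⁻ y, I ^ (1 / r') * (∫⁻ x, F x y ^ r ∂μ) ^ (1 / r) ∂ν := by
        gcongr with y
        calc _ ≤ (∫⁻ x, (g x ^ (r - 1)) ^ r' ∂μ) ^ (1 / r') * (∫⁻ x, F x y ^ r ∂μ) ^ (1 / r) :=
              ENNReal.lintegral_mul_le_Lp_mul_Lq μ hr'.symm (hg.pow_const _).aemeasurable
                (hF.comp measurable_prodMk_right).aemeasurable
          _ = _ := by simp_rw [← ENNReal.rpow_mul, hr'.sub_one_mul_conj]; rfl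
    _ = I ^ (1 / r') * ∫⁻ y, (∫⁻ x, F x y ^ r ∂μ) ^ (1 / r) ∂ν := lintegral_const_mul' _ _ hIr'
  rcases eq_or_ne I 0 with h0 | h0
  · rw [h0, ENNReal.zero_rpow_of_pos hr'.one_div_pos]
    exact zero_le
  have hsplit : I ^ (1 / r') * I ^ (1 / r) = I := by
    rw [← ENNReal.rpow_add _ _ h0 hfin, add_comm, hr'.one_div_add_one_div, div_one,
      ENNReal.rpow_one]
  exact (ENNReal.mul_le_mul_iff_right (ENNReal.rpow_pos (pos_iff_ne_zero.2 h0) hfin).ne' hIr').1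
    (hsplit.trans_le key)

theorem lintegral_Lp_lintegral_le [SigmaFinite μ] [SFinite ν] {F : X → Y → ℝ≥0∞}
    (hF : Measurable (uncurry F)) {r : ℝ} (hr : 1 ≤ r) :
    (∫⁻ x, (∫⁻ y, F x y ∂ν) ^ r ∂μ) ^ (1 / r) ≤ ∫⁻ y, (∫⁻ x, F x y ^ r ∂μ) ^ (1 / r) ∂ν := by
  rcases hr.eq_or_lt with rfl | hr
  · simp only [ENNReal.rpow_one, div_one]
    exact (lintegral_lintegral_swap hF.aemeasurable).le
  have hr0 : 0 < r := zero_lt_one.trans hr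
  -- Truncations `g k ↑ Φ` have finite `L^r` norm, so the previous lemma applies to them.
  set Φ : X → ℝ≥0∞ := fun x => ∫⁻ y, F x y ∂ν
  set g : ℕ → X → ℝ≥0∞ := fun k => (spanningSets μ k).indicator fun x => min (Φ x) k
  have hg k : Measurable (g k) :=
    (hF.lintegral_prod_right'.min measurable_const).indicator (measurableSet_spanningSets μ k)
  have hg_mono : Monotone g := fun i j hij x =>
    (indicator_le_indicator_of_subset (monotone_spanningSets μ hij) (fun _ => zero_le) x).trans
      (indicator_le_indicator (min_le_min le_rfl (Nat.cast_le.2 hij)))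
  have hg_sup x : ⨆ k, g k x = Φ x := by
    refine le_antisymm (iSup_le fun k => (indicator_le_self _ _ x).trans (min_le_left _ _)) ?_
    have hx := mem_spanningSetsIndex μ x
    calc Φ x = ⨆ k : ℕ, min (Φ x) k := by rw [← inf_iSup_eq, iSup_natCast, inf_top_eq]
      _ ≤ ⨆ k, g k x := iSup_le fun k => le_iSup_of_le (k + spanningSetsIndex μ x) <| by
        rw [show g _ x = _ from indicator_of_mem (monotone_spanningSets μ le_add_self hx) _]
        exact min_le_min le_rfl (Nat.cast_le.2 le_self_add)
  have hg_fin k : ∫⁻ x, g k x ^ r ∂μ ≠ ⊤ := by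
    have hle x : g k x ^ r ≤ (spanningSets μ k).indicator (fun _ => (k : ℝ≥0∞) ^ r) x := by
      by_cases hx : x ∈ spanningSets μ k
      · simp only [g, indicator_of_mem hx]
        exact rpow_le_rpow (min_le_right _ _) hr0.le
      · simp [g, hx, ENNReal.zero_rpow_of_pos hr0]
    refine ne_top_of_le_ne_top ?_ (lintegral_mono hle)
    rw [lintegral_indicator_const (measurableSet_spanningSets μ k)]
    exact mul_ne_top (rpow_ne_top_of_nonneg hr0.le (natCast_ne_top k))
      (measure_spanningSets_lt_top μ k).ne
  calc (∫⁻ x, Φ x ^ r ∂μ) ^ (1 / r) = (⨆ k, ∫⁻ x, g k x ^ r ∂μ) ^ (1 / r) := by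
        rw [← lintegral_iSup (fun k => (hg k).pow_const r)
          (fun i j h x => rpow_le_rpow (hg_mono h x) hr0.le)]
        simp_rw [← hg_sup]
        congr 2 with x
        exact (orderIsoRpow r hr0).map_iSup _
    _ = ⨆ k, (∫⁻ x, g k x ^ r ∂μ) ^ (1 / r) := (orderIsoRpow (1 / r) (by positivity)).map_iSup _
    _ ≤ _ := iSup_le fun k => lintegral_Lp_le_of_le_lintegral hF hr (hg k)
        (fun x => (indicator_le_self _ _ x).trans (min_le_left _ _)) (hg_fin k)

end Minkowski

section Holder

variable {X : Type*} [MeasurableSpace X] {μ : Measure X} {a b : X → ℝ≥0∞}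

theorem lintegral_le_lintegral_mul_rpow_mul_lintegral_rpow_neg {p p' : ℝ}
    (hpp' : p.HolderConjugate p') (ha : AEMeasurable a μ) (hb : AEMeasurable b μ)
    (hb0 : ∀ᵐ x ∂μ, b x ≠ 0) (hbtop : ∀ᵐ x ∂μ, b x ≠ ⊤) :
    ∫⁻ x, a x ∂μ ≤ (∫⁻ x, (a x * b x) ^ p ∂μ) ^ (1 / p) * (∫⁻ x, b x ^ (-p') ∂μ) ^ (1 / p') :=
  calc ∫⁻ x, a x ∂μ = ∫⁻ x, (a x * b x) * (b x)⁻¹ ∂μ := by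
        refine lintegral_congr_ae ?_
        filter_upwards [hb0, hbtop] with x h0 htop
        rw [mul_assoc, ENNReal.mul_inv_cancel h0 htop, mul_one]
    _ ≤ _ := ENNReal.lintegral_mul_le_Lp_mul_Lq μ hpp' (ha.mul hb) hb.inv
    _ = _ := by simp_rw [ENNReal.inv_rpow, ← ENNReal.rpow_neg]

theorem lintegral_eq_zero_of_lintegral_mul_rpow_eq_zero {p : ℝ} (hp : 0 ≤ p)
    (ha : AEMeasurable a μ) (hb : AEMeasurable b μ) (hb0 : ∀ᵐ x ∂μ, b x ≠ 0)
    (h : ∫⁻ x, (a x * b x) ^ p ∂μ = 0) : ∫⁻ x, a x ∂μ = 0 := by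
  refine lintegral_eq_zero_iff' ha |>.2 ?_
  filter_upwards [ae_eq_zero_of_lintegral_rpow_eq_zero hp (ha.mul hb) h, hb0] with x hx h0
  exact (mul_eq_zero.1 hx).resolve_right h0

end Holder

theorem lintegral_Ioi_ofReal_rpow_neg_sub_one {β c : ℝ} (hβ : 0 < β) (hc : 0 < c) :
    ∫⁻ s in Ioi c, ENNReal.ofReal (s ^ (-β - 1)) = ENNReal.ofReal (c ^ (-β) / β) := by
  have hβ1 : -β - 1 < -1 := by linarith
  rw [show c ^ (-β) / β = -c ^ (-β - 1 + 1) / (-β - 1 + 1) by ring_nf,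
    ← integral_Ioi_rpow_of_lt hβ1 hc,
    ofReal_integral_eq_lintegral_ofReal (integrableOn_Ioi_rpow_of_lt hβ1 hc)]
  filter_upwards [ae_restrict_mem measurableSet_Ioi] with s hs
  exact Real.rpow_nonneg (hc.trans hs).le _

theorem lintegral_Ioc_ofReal_rpow_neg {α c : ℝ} (hα : α < 1) (hc : 0 < c) :
    ∫⁻ s in Ioc 0 c, ENNReal.ofReal (s ^ (-α)) = ENNReal.ofReal (c ^ (1 - α) / (1 - α)) := by
  have hα1 : -1 < -α := by linarith
  have hint : IntegrableOn (fun s : ℝ => s ^ (-α)) (Ioc 0 c) :=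
    (intervalIntegrable_iff_integrableOn_Ioc_of_le hc.le).1
      (intervalIntegral.intervalIntegrable_rpow' hα1)
  have hval : ∫ s in Ioc 0 c, s ^ (-α) = c ^ (1 - α) / (1 - α) := by
    rw [← intervalIntegral.integral_of_le hc.le, integral_rpow (Or.inl hα1),
      Real.zero_rpow (by linarith), sub_zero, neg_add_eq_sub]
  rw [← hval, ofReal_integral_eq_lintegral_ofReal hint]
  filter_upwards [ae_restrict_mem measurableSet_Ioc] with s hs
  exact Real.rpow_nonneg hs.1.le _

theorem rpow_neg_eq_setLIntegral_Ioi {α : ℝ} (hα : 0 < α) {c : ℝ≥0∞} (hc : c ≠ 0) :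
    c ^ (-α) = ∫⁻ s in Ioi 0,
      {s : ℝ | c < ENNReal.ofReal s}.indicator (fun s => ENNReal.ofReal (α * s ^ (-α - 1))) s := by
  rcases eq_or_ne c ⊤ with rfl | hctop
  · simp [ENNReal.top_rpow_of_neg (neg_neg_of_pos hα)]
  obtain ⟨c, hc0, rfl⟩ : ∃ c₀ : ℝ, 0 < c₀ ∧ ENNReal.ofReal c₀ = c :=
    ⟨c.toReal, ENNReal.toReal_pos hc hctop, ENNReal.ofReal_toReal hctop⟩
  have hset : {s : ℝ | ENNReal.ofReal c < ENNReal.ofReal s} ∩ Ioi 0 = Ioi c := by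
    ext s
    simp only [mem_inter_iff, mem_ofPred_eq, mem_Ioi]
    constructor
    · rintro ⟨h, hs⟩
      exact (ENNReal.ofReal_lt_ofReal_iff hs).1 h
    · intro h
      exact ⟨(ENNReal.ofReal_lt_ofReal_iff (hc0.trans h)).2 h, hc0.trans h⟩
  have hmeas : MeasurableSet {s : ℝ | ENNReal.ofReal c < ENNReal.ofReal s} :=
    measurableSet_lt measurable_const ENNReal.measurable_ofReal
  simp_rw [ENNReal.ofReal_mul hα.le]
  rw [lintegral_indicator hmeas, Measure.restrict_restrict hmeas, hset,
    lintegral_const_mul' _ _ ofReal_ne_top, lintegral_Ioi_ofReal_rpow_neg_sub_one hα hc0,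
    ← ENNReal.ofReal_mul hα.le, mul_div_cancel₀ _ hα.ne', ENNReal.ofReal_rpow_of_pos hc0]

theorem setLIntegral_Ioi_rpow_mul_min_le {α : ℝ} (hα0 : 0 < α) (hα1 : α < 1) (c : ℝ≥0∞) :
    ∫⁻ s in Ioi 0, ENNReal.ofReal (α * s ^ (-α - 1)) * min c (ENNReal.ofReal s)
      ≤ ENNReal.ofReal (1 - α)⁻¹ * c ^ (1 - α) := by
  rcases eq_or_ne c ⊤ with rfl | hctop
  · rw [ENNReal.top_rpow_of_pos (by linarith), ENNReal.mul_top (by simp; linarith)]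
    exact le_top
  obtain ⟨c, hc0, rfl⟩ : ∃ c₀ : ℝ, 0 ≤ c₀ ∧ ENNReal.ofReal c₀ = c :=
    ⟨c.toReal, ENNReal.toReal_nonneg, ENNReal.ofReal_toReal hctop⟩
  rcases hc0.eq_or_lt with rfl | hc0
  · simp
  rw [← Ioc_union_Ioi_eq_Ioi hc0.le, lintegral_union measurableSet_Ioi (Ioc_disjoint_Ioi le_rfl)]
  have hα : 0 ≤ α := hα0.le
  calc _ ≤ (∫⁻ s in Ioc 0 c, ENNReal.ofReal (α * s ^ (-α)))
          + ∫⁻ s in Ioi c, ENNReal.ofReal (α * s ^ (-α - 1)) * ENNReal.ofReal c := by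
        refine add_le_add (setLIntegral_mono' measurableSet_Ioc fun s hs => ?_)
          (lintegral_mono fun s => by gcongr; exact min_le_left _ _)
        calc _ ≤ ENNReal.ofReal (α * s ^ (-α - 1)) * ENNReal.ofReal s := by
              gcongr; exact min_le_right _ _
          _ = ENNReal.ofReal (α * s ^ (-α)) := by
              rw [← ENNReal.ofReal_mul (mul_nonneg hα (Real.rpow_nonneg hs.1.le _)), mul_assoc,
                ← Real.rpow_add_one hs.1.ne', sub_add_cancel]
    _ = ENNReal.ofReal (α * (c ^ (1 - α) / (1 - α))) + ENNReal.ofReal (c ^ (1 - α)) := by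
        have e : ENNReal.ofReal α * ENNReal.ofReal (c ^ (-α) / α) * ENNReal.ofReal c
            = ENNReal.ofReal (c ^ (1 - α)) := by
          rw [← ENNReal.ofReal_mul hα, mul_div_cancel₀ _ hα0.ne',
            ← ENNReal.ofReal_mul (Real.rpow_nonneg hc0.le _), ← Real.rpow_add_one hc0.ne',
            neg_add_eq_sub]
        simp_rw [ENNReal.ofReal_mul hα]
        rw [lintegral_const_mul' _ _ ofReal_ne_top, lintegral_mul_const' _ _ ofReal_ne_top,
          lintegral_const_mul' _ _ ofReal_ne_top, lintegral_Ioc_ofReal_rpow_neg hα1 hc0,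
          lintegral_Ioi_ofReal_rpow_neg_sub_one hα0 hc0, e]
    _ = ENNReal.ofReal (1 - α)⁻¹ * ENNReal.ofReal c ^ (1 - α) := by
        have h1α : 0 < 1 - α := by linarith
        have hc1 : 0 ≤ c ^ (1 - α) := Real.rpow_nonneg hc0.le _
        rw [ENNReal.ofReal_rpow_of_pos hc0, ← ENNReal.ofReal_mul (inv_nonneg.2 h1α.le),
          ← ENNReal.ofReal_add (mul_nonneg hα (div_nonneg hc1 h1α.le)) hc1]
        congr 1
        field_simp
        ring

section Hardy

variable {E : Type*} [NormedAddCommGroup E] [MeasurableSpace E]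

noncomputable def hardyOperator (μ : Measure E) (f : E → ℝ≥0∞) (x : E) : ℝ≥0∞ :=
  ∫⁻ y in ball (0 : E) ‖x‖, f y ∂μ

noncomputable def hardyTwoWeightConst (μ : Measure E) (v w : E → ℝ≥0∞) (p' q α : ℝ) : ℝ≥0∞ :=
  ⨆ t ∈ Ioi (0 : ℝ), (∫⁻ y in ball (0 : E) t, v y ^ (-p') ∂μ) ^ (α / p') *
    (∫⁻ x in {x : E | t < ‖x‖},
      (hardyOperator μ (fun y => v y ^ (-p')) x ^ ((1 - α) / p') * w x) ^ q ∂μ) ^ (1 / q)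

variable {μ : Measure E}

theorem hardyOperator_zero (f : E → ℝ≥0∞) : hardyOperator μ f 0 = 0 := by
  simp [hardyOperator]

theorem hardyOperator_rpow_mul_le_hardyTwoWeightConst {p' q α : ℝ} (hαp' : 0 < α / p')
    (v w : E → ℝ≥0∞) (y : E) :
    hardyOperator μ (fun z => v z ^ (-p')) y ^ (α / p') *
      (∫⁻ x in {x : E | ‖y‖ < ‖x‖},
        (hardyOperator μ (fun z => v z ^ (-p')) x ^ ((1 - α) / p') * w x) ^ q ∂μ) ^ (1 / q)
      ≤ hardyTwoWeightConst μ v w p' q α := by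
  rcases eq_or_ne y 0 with rfl | hy
  · rw [hardyOperator_zero, zero_rpow_of_pos hαp', zero_mul]
    exact zero_le
  rw [hardyTwoWeightConst]
  exact le_iSup₂_of_le ‖y‖ (norm_pos_iff.2 hy) le_rfl

theorem rpow_mul_setLIntegral_rpow_le_hardyTwoWeightConst_rpow_mul {p p' q α : ℝ} (hp : 0 < p)
    (hαp' : 0 < α / p') (v w : E → ℝ≥0∞) (a : ℝ≥0∞) (y : E) :
    (a * (v y * hardyOperator μ (fun z => v z ^ (-p')) y ^ (α / p'))) ^ p *
      (∫⁻ x in {x : E | ‖y‖ < ‖x‖},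
        (hardyOperator μ (fun z => v z ^ (-p')) x ^ ((1 - α) / p') * w x) ^ q ∂μ) ^ (1 / (q / p))
      ≤ hardyTwoWeightConst μ v w p' q α ^ p * (a * v y) ^ p := by
  have hcomm (b c d e : ℝ≥0∞) : b * (c * d) * e = d * e * (b * c) := by ring
  rw [show 1 / (q / p) = 1 / q * p by rw [one_div_div, one_div_mul_eq_div], rpow_mul,
    ← mul_rpow_of_nonneg _ _ hp.le, ← mul_rpow_of_nonneg _ _ hp.le, hcomm]
  gcongr
  exact hardyOperator_rpow_mul_le_hardyTwoWeightConst hαp' v w y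

theorem measure_setOf_measure_ball_norm_lt_le (hμ : ∀ r, μ (sphere (0 : E) r) = 0) (s : ℝ≥0∞) :
    μ {y | μ (ball (0 : E) ‖y‖) < s} ≤ s := by
  set S := {r : ℝ | μ (ball (0 : E) r) < s}
  have hS : IsLowerSet S := fun a b hba ha => (measure_mono (ball_subset_ball hba)).trans_lt ha
  -- `S` is an interval, so `atTop` on it is countably generated and continuity from below
  -- applies to the closed balls indexed by `S`.
  have := hS.ordConnected
  have hclosed (r : S) : μ (closedBall (0 : E) r) ≤ s := by
    rw [← ball_union_sphere]
    exact (measure_union_le _ _).trans (by rw [hμ, add_zero]; exact r.2.le)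
  calc μ {y | μ (ball (0 : E) ‖y‖) < s} ≤ μ (⋃ r : S, closedBall (0 : E) r) :=
        measure_mono fun y hy => mem_iUnion.2 ⟨⟨‖y‖, hy⟩, mem_closedBall_zero_iff.2 le_rfl⟩
    _ = ⨆ r : S, μ (closedBall (0 : E) r) :=
        Monotone.measure_iUnion fun a b hab => closedBall_subset_closedBall hab
    _ ≤ s := iSup_le hclosed

theorem ae_measure_ball_norm_ne_zero (hμ : ∀ r, μ (sphere (0 : E) r) = 0) :
    ∀ᵐ y ∂μ, μ (ball (0 : E) ‖y‖) ≠ 0 := by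
  refine ae_iff.2 (nonpos_iff_eq_zero.1 (le_of_forall_gt_imp_ge_of_dense fun ε hε => ?_))
  refine (measure_mono fun y hy => ?_).trans (measure_setOf_measure_ball_norm_lt_le hμ ε)
  simp only [ne_eq, not_not, mem_ofPred_eq] at hy ⊢
  exact hy ▸ hε

variable [OpensMeasurableSpace E]

theorem measurable_measure_ball_norm :
    Measurable fun y : E => μ (ball (0 : E) ‖y‖) :=
  (Monotone.measurable fun _ _ h => measure_mono (ball_subset_ball h)).comp measurable_norm

theorem setLIntegral_measure_ball_norm_rpow_neg_le [SFinite μ]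
    (hμ : ∀ r, μ (sphere (0 : E) r) = 0) {α : ℝ} (hα0 : 0 < α) (hα1 : α < 1) (t : ℝ) :
    ∫⁻ y in ball (0 : E) t, μ (ball (0 : E) ‖y‖) ^ (-α) ∂μ
      ≤ ENNReal.ofReal (1 - α)⁻¹ * μ (ball (0 : E) t) ^ (1 - α) := by
  set V : E → ℝ≥0∞ := fun y => μ (ball (0 : E) ‖y‖)
  set k : ℝ → ℝ≥0∞ := fun s => ENNReal.ofReal (α * s ^ (-α - 1))
  have hV : Measurable V := measurable_measure_ball_norm
  have hk : Measurable k := by fun_prop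
  have hlevel (s : ℝ) : MeasurableSet {y | V y < ENNReal.ofReal s} :=
    measurableSet_lt hV measurable_const
  -- Layer cake: `V ^ (-α) = ∫_{s > V} k s ds`, and `μ {V < s} ≤ s`.
  calc ∫⁻ y in ball (0 : E) t, V y ^ (-α) ∂μ
      = ∫⁻ y in ball (0 : E) t,
          (∫⁻ s in Ioi 0, {s | V y < ENNReal.ofReal s}.indicator k s) ∂μ := by
        refine lintegral_congr_ae (ae_restrict_of_ae ?_)
        filter_upwards [ae_measure_ball_norm_ne_zero hμ] with y hy
        exact rpow_neg_eq_setLIntegral_Ioi hα0 hy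
    _ = ∫⁻ s in Ioi 0, ∫⁻ y in ball (0 : E) t, {s | V y < ENNReal.ofReal s}.indicator k s ∂μ :=
        lintegral_lintegral_swap ((hk.comp measurable_snd).indicator
          (measurableSet_lt (hV.comp measurable_fst)
            (ENNReal.measurable_ofReal.comp measurable_snd))).aemeasurable
    _ = ∫⁻ s in Ioi 0, k s * μ ({y | V y < ENNReal.ofReal s} ∩ ball (0 : E) t) := by
        refine lintegral_congr fun s => ?_
        rw [← Measure.restrict_apply (hlevel s), ← lintegral_indicator_const (hlevel s)]
        rfl
    _ ≤ ∫⁻ s in Ioi 0, k s * min (μ (ball (0 : E) t)) (ENNReal.ofReal s) := by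
        gcongr with s
        exact le_min (measure_mono inter_subset_right) ((measure_mono inter_subset_left).trans
          (measure_setOf_measure_ball_norm_lt_le hμ _))
    _ ≤ ENNReal.ofReal (1 - α)⁻¹ * μ (ball (0 : E) t) ^ (1 - α) :=
        setLIntegral_Ioi_rpow_mul_min_le hα0 hα1 _

theorem hardyOperator_eq_withDensity_apply (f : E → ℝ≥0∞) (x : E) :
    hardyOperator μ f x = μ.withDensity f (ball (0 : E) ‖x‖) :=
  (withDensity_apply f measurableSet_ball).symm

theorem measurable_hardyOperator (f : E → ℝ≥0∞) : Measurable (hardyOperator μ f) := by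
  rw [funext (hardyOperator_eq_withDensity_apply f)]
  exact measurable_measure_ball_norm

theorem ae_hardyOperator_ne_zero (hμ : ∀ r, μ (sphere (0 : E) r) = 0) {u : E → ℝ≥0∞}
    (hu : Measurable u) (hu0 : ∀ᵐ y ∂μ, u y ≠ 0) : ∀ᵐ y ∂μ, hardyOperator μ u y ≠ 0 := by
  simp_rw [hardyOperator_eq_withDensity_apply]
  exact withDensity_absolutelyContinuous' hu.aemeasurable hu0 |>.ae_le <|
    ae_measure_ball_norm_ne_zero fun r => withDensity_absolutelyContinuous μ u (hμ r)

theorem setLIntegral_mul_hardyOperator_rpow_neg_le [SFinite μ]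
    (hμ : ∀ r, μ (sphere (0 : E) r) = 0) {u : E → ℝ≥0∞} (hu : Measurable u) {α : ℝ}
    (hα0 : 0 < α) (hα1 : α < 1) (t : ℝ) :
    ∫⁻ y in ball (0 : E) t, u y * hardyOperator μ u y ^ (-α) ∂μ
      ≤ ENNReal.ofReal (1 - α)⁻¹ * (∫⁻ y in ball (0 : E) t, u y ∂μ) ^ (1 - α) := by
  calc ∫⁻ y in ball (0 : E) t, u y * hardyOperator μ u y ^ (-α) ∂μ
      = ∫⁻ y in ball (0 : E) t, μ.withDensity u (ball (0 : E) ‖y‖) ^ (-α) ∂μ.withDensity u := by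
        simp_rw [← hardyOperator_eq_withDensity_apply]
        exact (setLIntegral_withDensity_eq_setLIntegral_mul μ hu
          ((measurable_hardyOperator u).pow_const _) measurableSet_ball).symm
    _ ≤ _ := setLIntegral_measure_ball_norm_rpow_neg_le
        (fun r => withDensity_absolutelyContinuous μ u (hμ r)) hα0 hα1 t
    _ = _ := by rw [withDensity_apply u measurableSet_ball]

theorem lintegral_hardyOperator_rpow_mul_le [SigmaFinite μ] {φ G : E → ℝ≥0∞} (hφ : Measurable φ)
    (hG : Measurable G) {r : ℝ} (hr : 1 ≤ r) :
    (∫⁻ x, hardyOperator μ φ x ^ r * G x ∂μ) ^ (1 / r)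
      ≤ ∫⁻ y, φ y * (∫⁻ x in {x | ‖y‖ < ‖x‖}, G x ∂μ) ^ (1 / r) ∂μ := by
  have hr0 : 0 < r := by linarith
  set F : E → E → ℝ≥0∞ := fun x y => {y : E | ‖y‖ < ‖x‖}.indicator φ y * G x ^ (1 / r)
  have hF : Measurable (uncurry F) :=
    ((hφ.comp measurable_snd).indicator (measurableSet_lt measurable_snd.norm
      measurable_fst.norm)).mul ((hG.comp measurable_fst).pow_const _)
  calc (∫⁻ x, hardyOperator μ φ x ^ r * G x ∂μ) ^ (1 / r)
      = (∫⁻ x, (∫⁻ y, F x y ∂μ) ^ r ∂μ) ^ (1 / r) := by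
        congr 1
        refine lintegral_congr fun x => ?_
        have hball : {y : E | ‖y‖ < ‖x‖} = ball 0 ‖x‖ := by ext; simp
        rw [lintegral_mul_const _ (hφ.indicator (measurableSet_lt measurable_norm
          measurable_const)), lintegral_indicator (measurableSet_lt measurable_norm
          measurable_const), hball, mul_rpow_of_nonneg _ _ hr0.le, ← rpow_mul,
          one_div_mul_cancel hr0.ne', rpow_one]
        rfl
    _ ≤ ∫⁻ y, (∫⁻ x, F x y ^ r ∂μ) ^ (1 / r) ∂μ := lintegral_Lp_lintegral_le hF hr
    _ = _ := by
        refine lintegral_congr fun y => ?_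
        have hFr (x : E) : F x y ^ r = {x | ‖y‖ < ‖x‖}.indicator (fun x => φ y ^ r * G x) x := by
          by_cases h : ‖y‖ < ‖x‖
          · simp [F, h, mul_rpow_of_nonneg _ _ hr0.le, ← rpow_mul, inv_mul_cancel₀ hr0.ne']
          · simp [F, h, zero_rpow_of_pos hr0]
        simp_rw [hFr]
        rw [lintegral_indicator (measurableSet_lt measurable_const measurable_norm),
          lintegral_const_mul _ hG, mul_rpow_of_nonneg _ _ (by positivity), ← rpow_mul,
          mul_one_div_cancel hr0.ne', rpow_one]

theorem setLIntegral_mul_hardyOperator_rpow_rpow_neg_le [SFinite μ]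
    (hμ : ∀ r, μ (sphere (0 : E) r) = 0) {p' α : ℝ} (hp' : 0 < p') (hα0 : 0 < α) (hα1 : α < 1)
    {v : E → ℝ≥0∞} (hv : Measurable v) (hv0 : ∀ᵐ y ∂μ, v y ≠ 0) (hvtop : ∀ᵐ y ∂μ, v y ≠ ⊤)
    (t : ℝ) :
    ∫⁻ y in ball (0 : E) t, (v y * hardyOperator μ (fun z => v z ^ (-p')) y ^ (α / p')) ^ (-p') ∂μ
      ≤ ENNReal.ofReal (1 - α)⁻¹ * (∫⁻ y in ball (0 : E) t, v y ^ (-p') ∂μ) ^ (1 - α) := by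
  have hu : Measurable fun y => v y ^ (-p') := hv.pow_const _
  refine le_trans (le_of_eq (lintegral_congr_ae (ae_restrict_of_ae ?_)))
    (setLIntegral_mul_hardyOperator_rpow_neg_le hμ hu hα0 hα1 t)
  filter_upwards [hv0, ae_hardyOperator_ne_zero hμ hu (hvtop.mono fun _ h => by simp [h, hp'.le])]
    with y h1 h2
  rw [mul_rpow_of_ne_zero h1 ((rpow_eq_zero_iff_of_pos (by positivity)).not.2 h2), ← rpow_mul,
    div_mul_eq_mul_div, mul_neg, neg_div, mul_div_cancel_right₀ _ hp'.ne']

theorem hardyOperator_le_mul_hardyOperator_rpow [SFinite μ] (hμ : ∀ r, μ (sphere (0 : E) r) = 0)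
    {p p' : ℝ} (hpp' : p.HolderConjugate p') {α : ℝ} (hα0 : 0 < α) (hα1 : α < 1)
    {f v : E → ℝ≥0∞} (hf : Measurable f) (hv : Measurable v) (hv0 : ∀ᵐ y ∂μ, v y ≠ 0)
    (hvtop : ∀ᵐ y ∂μ, v y ≠ ⊤) (x : E) :
    hardyOperator μ f x ≤ ENNReal.ofReal ((1 - α) ^ (-(1 / p'))) *
      hardyOperator μ (fun y => (f y * (v y * hardyOperator μ (fun z => v z ^ (-p')) y ^ (α / p')))
        ^ p) x ^ (1 / p) * hardyOperator μ (fun y => v y ^ (-p')) x ^ ((1 - α) / p') := by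
  set U := hardyOperator μ fun y => v y ^ (-p')
  set b : E → ℝ≥0∞ := fun y => v y * U y ^ (α / p')
  have hp' : 0 < p' := hpp'.symm.pos
  have h1α : 0 < 1 - α := by linarith
  have hb : Measurable b := hv.mul ((measurable_hardyOperator _).pow_const _)
  have hb0 : ∀ᵐ y ∂μ, b y ≠ 0 := by
    filter_upwards [hv0, ae_hardyOperator_ne_zero hμ (hv.pow_const (-p'))
      (hvtop.mono fun _ h => by simp [h, hp'.le])] with y h1 h2
    exact mul_ne_zero h1 ((rpow_eq_zero_iff_of_pos (by positivity)).not.2 h2)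
  rcases eq_or_ne (U x) ⊤ with hUx | hUx
  · rcases eq_or_ne (hardyOperator μ (fun y => (f y * b y) ^ p) x) 0 with hΦ | hΦ
    · rw [show hardyOperator μ f x = 0 from lintegral_eq_zero_of_lintegral_mul_rpow_eq_zero
        hpp'.nonneg hf.aemeasurable hb.aemeasurable (ae_restrict_of_ae hb0) hΦ]
      exact zero_le
    · rw [hUx, top_rpow_of_pos (by positivity), mul_top (mul_ne_zero ?_ ?_)]
      · exact le_top
      · exact (ENNReal.ofReal_pos.2 (Real.rpow_pos_of_pos h1α _)).ne'
      · exact (rpow_eq_zero_iff_of_pos hpp'.one_div_pos).not.2 hΦ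
  have hbtop : ∀ᵐ y ∂μ.restrict (ball 0 ‖x‖), b y ≠ ⊤ := by
    filter_upwards [ae_restrict_of_ae hvtop, ae_restrict_mem measurableSet_ball] with y h1 h2
    exact mul_ne_top h1 (rpow_ne_top_of_nonneg (by positivity) (ne_top_of_le_ne_top hUx
      (lintegral_mono_set (ball_subset_ball (mem_ball_zero_iff.1 h2).le))))
  calc hardyOperator μ f x
      ≤ hardyOperator μ (fun y => (f y * b y) ^ p) x ^ (1 / p) *
          (∫⁻ y in ball 0 ‖x‖, b y ^ (-p') ∂μ) ^ (1 / p') :=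
        lintegral_le_lintegral_mul_rpow_mul_lintegral_rpow_neg hpp' hf.aemeasurable
          hb.aemeasurable (ae_restrict_of_ae hb0) hbtop
    _ ≤ hardyOperator μ (fun y => (f y * b y) ^ p) x ^ (1 / p) *
          (ENNReal.ofReal (1 - α)⁻¹ * U x ^ (1 - α)) ^ (1 / p') := by
        gcongr
        exact setLIntegral_mul_hardyOperator_rpow_rpow_neg_le hμ hp' hα0 hα1 hv hv0 hvtop ‖x‖
    _ = _ := by
        rw [mul_rpow_of_nonneg _ _ hpp'.symm.one_div_nonneg,
          ENNReal.ofReal_rpow_of_nonneg (inv_nonneg.2 h1α.le) hpp'.symm.one_div_nonneg,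
          Real.inv_rpow h1α.le, ← Real.rpow_neg h1α.le, ← rpow_mul, mul_one_div]
        ring

theorem lintegral_hardyOperator_mul_rpow_le_hardyTwoWeightConst [SigmaFinite μ]
    (hμ : ∀ r, μ (sphere (0 : E) r) = 0) {p p' q α : ℝ} (hpp' : p.HolderConjugate p')
    (hpq : p ≤ q) (hα0 : 0 < α) (hα1 : α < 1)
    {f v w : E → ℝ≥0∞} (hf : Measurable f) (hv : Measurable v) (hw : Measurable w)
    (hv0 : ∀ᵐ y ∂μ, v y ≠ 0) (hvtop : ∀ᵐ y ∂μ, v y ≠ ⊤) :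
    (∫⁻ x, (hardyOperator μ f x * w x) ^ q ∂μ) ^ (1 / q)
      ≤ ENNReal.ofReal ((1 - α) ^ (-(1 / p'))) * hardyTwoWeightConst μ v w p' q α *
        (∫⁻ x, (f x * v x) ^ p ∂μ) ^ (1 / p) := by
  set C := ENNReal.ofReal ((1 - α) ^ (-(1 / p')))
  set A := hardyTwoWeightConst μ v w p' q α
  set U := hardyOperator μ (fun z => v z ^ (-p'))
  set φ : E → ℝ≥0∞ := fun y => (f y * (v y * U y ^ (α / p'))) ^ p
  set G : E → ℝ≥0∞ := fun x => (U x ^ ((1 - α) / p') * w x) ^ q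
  have hp : 0 < p := hpp'.pos
  have hq : 0 < q := hp.trans_le hpq
  have hU : Measurable U := measurable_hardyOperator _
  have hφ : Measurable φ := (hf.mul (hv.mul (hU.pow_const _))).pow_const _
  have hG : Measurable G := ((hU.pow_const _).mul hw).pow_const _
  calc (∫⁻ x, (hardyOperator μ f x * w x) ^ q ∂μ) ^ (1 / q)
      ≤ (∫⁻ x, C ^ q * (hardyOperator μ φ x ^ (q / p) * G x) ∂μ) ^ (1 / q) := by
        gcongr with x
        calc (hardyOperator μ f x * w x) ^ q
            ≤ (C * hardyOperator μ φ x ^ (1 / p) * U x ^ ((1 - α) / p') * w x) ^ q := by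
              gcongr
              exact hardyOperator_le_mul_hardyOperator_rpow hμ hpp' hα0 hα1 hf hv hv0 hvtop x
          _ = _ := by
              rw [mul_assoc, mul_assoc C, mul_rpow_of_nonneg _ _ hq.le,
                mul_rpow_of_nonneg _ _ hq.le, ← rpow_mul, one_div_mul_eq_div]
    _ = C * ((∫⁻ x, hardyOperator μ φ x ^ (q / p) * G x ∂μ) ^ (1 / (q / p))) ^ (1 / p) := by
        rw [lintegral_const_mul' _ _ (rpow_ne_top_of_nonneg hq.le ofReal_ne_top),
          mul_rpow_of_nonneg _ _ (by positivity), ← rpow_mul, mul_one_div_cancel hq.ne', rpow_one,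
          ← rpow_mul]
        congr 2
        field_simp
    _ ≤ C * (∫⁻ y, φ y * (∫⁻ x in {x | ‖y‖ < ‖x‖}, G x ∂μ) ^ (1 / (q / p)) ∂μ) ^ (1 / p) := by
        gcongr
        exact lintegral_hardyOperator_rpow_mul_le hφ hG ((one_le_div hp).2 hpq)
    _ ≤ C * (∫⁻ y, A ^ p * (f y * v y) ^ p ∂μ) ^ (1 / p) := by
        refine mul_le_mul_right (rpow_le_rpow (lintegral_mono fun y => ?_) (by positivity)) C
        exact rpow_mul_setLIntegral_rpow_le_hardyTwoWeightConst_rpow_mul hp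
          (div_pos hα0 hpp'.symm.pos) v w (f y) y
    _ = C * A * (∫⁻ y, (f y * v y) ^ p ∂μ) ^ (1 / p) := by
        rw [lintegral_const_mul (f := fun y => (f y * v y) ^ p) _ ((hf.mul hv).pow_const _),
          mul_rpow_of_nonneg _ _ (by positivity),
          ← rpow_mul, mul_one_div_cancel hp.ne', rpow_one, mul_assoc]

end Hardy

theorem hardy_two_weight_sufficiency_general
    (n : ℕ) (hn : 1 ≤ n) (p q p' : ℝ) (hp : 1 < p) (hpq : p ≤ q)
    (hp' : p' = p / (p - 1))
    (v w : EuclideanSpace ℝ (Fin n) → ℝ)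
    (hv : Measurable v) (hvpos : ∀ᵐ x, 0 < v x)
    (hw : Measurable w)
    (α : ℝ) (hα : α ∈ Set.Ioo (0 : ℝ) 1) :
    ∀ f : EuclideanSpace ℝ (Fin n) → ℝ, Measurable f → (∀ x, 0 ≤ f x) →
      (∫⁻ x, ((∫⁻ y in ball (0 : EuclideanSpace ℝ (Fin n)) ‖x‖,
            ENNReal.ofReal (f y)) * ENNReal.ofReal (w x)) ^ q) ^ (1 / q)
        ≤ ENNReal.ofReal ((1 - α) ^ (-(1 / p'))) *
          (⨆ t ∈ Set.Ioi (0 : ℝ),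
            (∫⁻ y in ball (0 : EuclideanSpace ℝ (Fin n)) t,
                ENNReal.ofReal (v y) ^ (-p')) ^ (α / p') *
            (∫⁻ x in {x : EuclideanSpace ℝ (Fin n) | t < ‖x‖},
                ((∫⁻ y in ball (0 : EuclideanSpace ℝ (Fin n)) ‖x‖,
                    ENNReal.ofReal (v y) ^ (-p')) ^ ((1 - α) / p') *
                  ENNReal.ofReal (w x)) ^ q) ^ (1 / q)) *
          (∫⁻ x, ENNReal.ofReal (f x * v x) ^ p) ^ (1 / p) := by
  intro f hf hf0
  have : Nonempty (Fin n) := ⟨⟨0, hn⟩⟩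
  simp_rw [ENNReal.ofReal_mul (hf0 _)]
  exact lintegral_hardyOperator_mul_rpow_le_hardyTwoWeightConst (Measure.addHaar_sphere volume 0)
    ((Real.holderConjugate_iff_eq_conjExponent hp).2 hp') hpq hα.1 hα.2
    (ENNReal.measurable_ofReal.comp hf) (ENNReal.measurable_ofReal.comp hv)
    (ENNReal.measurable_ofReal.comp hw) (hvpos.mono fun _ hx => (ENNReal.ofReal_pos.2 hx).ne')
    (ae_of_all _ fun _ => ofReal_ne_top)

/-- Sufficiency half, with explicit constant `(1-α)^{-1/p'} A(α)`, of the two-weight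
criterion for the multidimensional Hardy operator (constant-exponent case of
Theorem 2 of the paper). -/
theorem hardy_two_weight_sufficiency
    (n : ℕ) (hn : 1 ≤ n) (p q p' : ℝ) (hp : 1 < p) (hpq : p ≤ q)
    (hp' : p' = p / (p - 1))
    (v w : EuclideanSpace ℝ (Fin n) → ℝ)
    (hv : Measurable v) (hv0 : ∀ x, 0 ≤ v x) (hvpos : ∀ᵐ x, 0 < v x)
    (hw : Measurable w) (hw0 : ∀ x, 0 ≤ w x) (hwpos : ∀ᵐ x, 0 < w x)
    (α : ℝ) (hα : α ∈ Set.Ioo (0 : ℝ) 1)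
    (hA : (⨆ t ∈ Set.Ioi (0 : ℝ),
        (∫⁻ y in ball (0 : EuclideanSpace ℝ (Fin n)) t,
            ENNReal.ofReal (v y) ^ (-p')) ^ (α / p') *
        (∫⁻ x in {x : EuclideanSpace ℝ (Fin n) | t < ‖x‖},
            ((∫⁻ y in ball (0 : EuclideanSpace ℝ (Fin n)) ‖x‖,
                ENNReal.ofReal (v y) ^ (-p')) ^ ((1 - α) / p') *
              ENNReal.ofReal (w x)) ^ q) ^ (1 / q)) < ⊤) :
    ∀ f : EuclideanSpace ℝ (Fin n) → ℝ, Measurable f → (∀ x, 0 ≤ f x) →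
      (∫⁻ x, ((∫⁻ y in ball (0 : EuclideanSpace ℝ (Fin n)) ‖x‖,
            ENNReal.ofReal (f y)) * ENNReal.ofReal (w x)) ^ q) ^ (1 / q)
        ≤ ENNReal.ofReal ((1 - α) ^ (-(1 / p'))) *
          (⨆ t ∈ Set.Ioi (0 : ℝ),
            (∫⁻ y in ball (0 : EuclideanSpace ℝ (Fin n)) t,
                ENNReal.ofReal (v y) ^ (-p')) ^ (α / p') *
            (∫⁻ x in {x : EuclideanSpace ℝ (Fin n) | t < ‖x‖},
                ((∫⁻ y in ball (0 : EuclideanSpace ℝ (Fin n)) ‖x‖,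
                    ENNReal.ofReal (v y) ^ (-p')) ^ ((1 - α) / p') *
                  ENNReal.ofReal (w x)) ^ q) ^ (1 / q)) *
          (∫⁻ x, ENNReal.ofReal (f x * v x) ^ p) ^ (1 / p) :=
  hardy_two_weight_sufficiency_general n hn p q p' hp hpq hp' v w hv hvpos hw α hα
end

section
/- Let n ≥ 1 and 0 < p ≤ q < ∞, and let v, w be weights on ℝⁿ with ln(1/v) integrable on every ball. Suppose C > 0 is a constant such that (∫_{ℝⁿ} (Gf(x) · w(x))^q dx)^{1/q} ≤ C · (∫_{ℝⁿ} (f(x) · v(x))^p dx)^{1/p} for every measurable f > 0 with ln f integrable on every ball. Then for every s ∈ (1,∞): e^{s/p} · ( e^s + 1/(s-1) )^{-1/p} · D(s) ≤ C, where D(s) := sup_{t>0} |B(0,t)|^{(s-1)/p} · ( ∫_{|x|>t} [ w(x) · |B(0,|x|)|^{-s/p} · exp( (1/|B(0,|x|)|) ∫_{|y|<|x|} ln(1/v(y)) dy ) ]^q dx )^{1/q}. -/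
/-!
Test the inequality against `f = exp (a φ(|x|)) / v` with `a = s / p`, where `φ = 1` on `B(0,t)`
and `φ(r) = n log (t / r)` for `r ≥ t`. Then `(f v)^p = exp (s φ)` has integral
`|B(0,t)| (e^s + 1/(s-1))`, while for `R ≥ t` the average of `φ` over `B(0,R)` is
`1 + log (|B(0,t)| / |B(0,R)|)`, so that `Gf(x) = e^a |B(0,t)|^a |B(0,|x|)|^(-a) G(1/v)(x)` for
`|x| ≥ t`. Restricting the left-hand side to `|x| > t` and dividing by the right-hand side gives
the bound for every `t`.
-/

open MeasureTheory ENNReal Metric Set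

local notation "dim" => Module.finrank ℝ

lemma integral_Ioo_zero_pow_pred {n : ℕ} (hn : 1 ≤ n) {t : ℝ} (ht : 0 ≤ t) :
    ∫ y in Ioo (0 : ℝ) t, y ^ (n - 1) = t ^ n / n := by
  rw [← integral_Ioc_eq_integral_Ioo, ← intervalIntegral.integral_of_le ht, integral_pow,
    Nat.sub_add_cancel hn, zero_pow (by omega), sub_zero, Nat.cast_sub hn, Nat.cast_one,
    sub_add_cancel]

lemma lintegral_Ioo_zero_pow_pred {n : ℕ} (hn : 1 ≤ n) {t : ℝ} (ht : 0 ≤ t) :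
    ∫⁻ y in Ioo (0 : ℝ) t, ENNReal.ofReal (y ^ (n - 1)) = ENNReal.ofReal (t ^ n / n) := by
  have hint : IntegrableOn (fun y : ℝ => y ^ (n - 1)) (Ioo 0 t) :=
    (continuous_pow _).integrableOn_Icc.mono_set Ioo_subset_Icc_self
  rw [← ofReal_integral_eq_lintegral_ofReal hint
    ((ae_restrict_iff' measurableSet_Ioo).2 (ae_of_all _ fun y hy => pow_nonneg hy.1.le _)),
    integral_Ioo_zero_pow_pred hn ht]

lemma continuousOn_mul_pow_pred_mul_log_div (n : ℕ) {t : ℝ} (ht : 0 < t) (R : ℝ) :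
    ContinuousOn (fun y => n * y ^ (n - 1) * Real.log (t / y)) (Icc t R) :=
  continuousOn_const.mul (continuousOn_pow _) |>.mul <| Real.continuousOn_log.comp
    (continuousOn_const.div continuousOn_id fun _ hy => (ht.trans_le hy.1).ne')
    fun _ hy => (div_pos ht (ht.trans_le hy.1)).ne'

lemma integral_Ico_mul_pow_pred_mul_log_div {n : ℕ} (hn : 1 ≤ n) {t R : ℝ} (ht : 0 < t)
    (htR : t ≤ R) :
    ∫ y in Ico t R, n * y ^ (n - 1) * Real.log (t / y)
      = R ^ n * Real.log (t / R) + (R ^ n - t ^ n) / n := by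
  have hderiv : ∀ y ∈ uIcc t R, HasDerivAt (fun y => y ^ n * Real.log (t / y) + y ^ n / n)
      (n * y ^ (n - 1) * Real.log (t / y)) y := by
    intro y hy
    rw [uIcc_of_le htR] at hy
    have hy0 : 0 < y := ht.trans_le hy.1
    have hlog : HasDerivAt (fun y => Real.log (t / y)) (-y⁻¹) y := by
      refine (((hasDerivAt_inv hy0.ne').const_mul t).log (div_pos ht hy0).ne').congr_deriv ?_
      field_simp
    refine (((hasDerivAt_pow n y).mul hlog).add
      ((hasDerivAt_pow n y).div_const (n : ℝ))).congr_deriv ?_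
    have hpow : y ^ n = y ^ (n - 1) * y := by rw [← pow_succ, Nat.sub_add_cancel hn]
    have hn0 : (n : ℝ) ≠ 0 := by positivity
    rw [hpow]
    field_simp
    ring
  rw [integral_Ico_eq_integral_Ioo, ← integral_Ioc_eq_integral_Ioo,
    ← intervalIntegral.integral_of_le htR, intervalIntegral.integral_eq_sub_of_hasDerivAt hderiv
      ((continuousOn_mul_pow_pred_mul_log_div n ht R).intervalIntegrable_of_Icc htR),
    div_self ht.ne', Real.log_one]
  ring

lemma lintegral_Ioi_pow_pred_mul_div_rpow {n : ℕ} (hn : 1 ≤ n) {t σ : ℝ} (ht : 0 < t)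
    (hσ : n < σ) :
    ∫⁻ y in Ioi t, ENNReal.ofReal (y ^ (n - 1) * (t / y) ^ σ)
      = ENNReal.ofReal (t ^ n / (σ - n)) := by
  have hrpow : EqOn (fun y => t ^ σ * y ^ ((n : ℝ) - 1 - σ)) (fun y => y ^ (n - 1) * (t / y) ^ σ)
      (Ioi t) := by
    intro y hy
    have hy0 : 0 < y := ht.trans hy
    simp only
    rw [Real.div_rpow ht.le hy0.le, ← Real.rpow_natCast y (n - 1), Nat.cast_sub hn,
      Real.rpow_sub hy0, Nat.cast_one, Real.rpow_sub hy0, Real.rpow_one]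
    field_simp
  have hint : IntegrableOn (fun y => t ^ σ * y ^ ((n : ℝ) - 1 - σ)) (Ioi t) :=
    (integrableOn_Ioi_rpow_of_lt (by linarith) ht).const_mul _
  rw [← ofReal_integral_eq_lintegral_ofReal (hint.congr_fun hrpow measurableSet_Ioi)
      ((ae_restrict_iff' measurableSet_Ioi).2 (ae_of_all _ fun y hy => by
        have := ht.trans hy; positivity)),
    ← setIntegral_congr_fun measurableSet_Ioi hrpow, integral_const_mul,
    integral_Ioi_rpow_of_lt (by linarith) ht, show (n : ℝ) - 1 - σ + 1 = -(σ - n) by ring,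
    Real.rpow_neg ht.le, Real.rpow_sub ht, Real.rpow_natCast]
  congr 1
  have : σ - n ≠ 0 := by linarith
  field_simp

noncomputable def logProfile (n : ℕ) (t r : ℝ) : ℝ := if r < t then 1 else n * Real.log (t / r)

lemma measurable_logProfile (n : ℕ) (t : ℝ) : Measurable (logProfile n t) :=
  Measurable.ite measurableSet_Iio measurable_const
    (measurable_const.mul (measurable_const.div measurable_id).log)

lemma integrableOn_ball_logProfile {E : Type*} [NormedAddCommGroup E] [MeasurableSpace E]
    [OpensMeasurableSpace E] [ProperSpace E] (μ : Measure E) [IsFiniteMeasureOnCompacts μ]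
    (n : ℕ) {t : ℝ} (ht : 0 < t) (R : ℝ) :
    IntegrableOn (fun x => logProfile n t ‖x‖) (ball (0 : E) R) μ := by
  refine Measure.integrableOn_of_bounded (M := 1 + n * |Real.log (t / R)|)
    measure_ball_lt_top.ne
    ((measurable_logProfile n t).comp measurable_norm).aestronglyMeasurable
    ((ae_restrict_iff' measurableSet_ball).2 (ae_of_all _ fun x hx => ?_))
  have hxR : ‖x‖ < R := mem_ball_zero_iff.1 hx
  have hM : 0 ≤ n * |Real.log (t / R)| := by positivity
  simp only [logProfile, Real.norm_eq_abs]
  split_ifs with hxt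
  · simpa using hM
  · have hx0 : 0 < ‖x‖ := ht.trans_le (not_lt.1 hxt)
    have hlog_le : Real.log (t / ‖x‖) ≤ 0 :=
      Real.log_nonpos (by positivity) ((div_le_one hx0).2 (not_lt.1 hxt))
    have hlog_ge : Real.log (t / R) ≤ Real.log (t / ‖x‖) :=
      Real.log_le_log (div_pos ht (hx0.trans hxR)) (div_le_div_of_nonneg_left ht.le hx0 hxR.le)
    rw [abs_mul, Nat.abs_cast, abs_of_nonpos hlog_le]
    have : -Real.log (t / ‖x‖) ≤ |Real.log (t / R)| := by
      linarith [neg_abs_le (Real.log (t / R))]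
    nlinarith [(n.cast_nonneg : (0 : ℝ) ≤ n)]

section Radial

variable {E : Type*} [NormedAddCommGroup E] [NormedSpace ℝ E] [MeasurableSpace E] [BorelSpace E]
  [FiniteDimensional ℝ E] [Nontrivial E] (μ : Measure E) [μ.IsAddHaarMeasure]

lemma MeasureTheory.Measure.addHaar_real_ball {r : ℝ} (hr : 0 ≤ r) :
    μ.real (ball (0 : E) r) = r ^ dim E * μ.real (ball 0 1) := by
  rw [measureReal_def, Measure.addHaar_ball μ _ hr, toReal_mul, toReal_ofReal (by positivity),
    measureReal_def]

lemma lintegral_fun_norm_addHaar (f : ℝ → ℝ≥0∞) (hf : Measurable f) :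
    ∫⁻ x, f ‖x‖ ∂μ
      = dim E * μ (ball 0 1) * ∫⁻ y in Ioi (0 : ℝ), ENNReal.ofReal (y ^ (dim E - 1)) * f y := by
  have hf_snd : AEMeasurable (fun x : sphere (0 : E) 1 × Ioi (0 : ℝ) => f x.2)
      (μ.toSphere.prod (.volumeIoiPow (dim E - 1))) :=
    (hf.comp (measurable_subtype_coe.comp measurable_snd)).aemeasurable
  have hf_val : Measurable fun y : Ioi (0 : ℝ) => f y := hf.comp measurable_subtype_coe
  calc
    ∫⁻ x, f ‖x‖ ∂μ = ∫⁻ x : ({(0)}ᶜ : Set E), f ‖x.1‖ ∂(μ.comap (↑)) := by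
      rw [lintegral_subtype_comap (measurableSet_singleton _).compl fun x ↦ f (‖x‖),
        restrict_compl_singleton]
    _ = ∫⁻ x : sphere (0 : E) 1 × Ioi (0 : ℝ), f x.2
          ∂(μ.toSphere.prod (.volumeIoiPow (dim E - 1))) := by
      simpa using μ.measurePreserving_homeomorphUnitSphereProd.lintegral_comp_emb
        (Homeomorph.measurableEmbedding _) (fun x => f x.2)
    _ = μ.toSphere univ * ∫⁻ y : Ioi (0 : ℝ), f y ∂(.volumeIoiPow (dim E - 1)) := by
      rw [lintegral_prod _ hf_snd]
      simp [lintegral_const, mul_comm]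
    _ = _ := by
      rw [μ.toSphere_apply_univ, Measure.volumeIoiPow,
        lintegral_withDensity_eq_lintegral_mul _
          (measurable_subtype_coe.pow_const _).ennreal_ofReal hf_val,
        ← lintegral_subtype_comap measurableSet_Ioi
          (fun y : ℝ => ENNReal.ofReal (y ^ (dim E - 1)) * f y)]
      rfl

lemma setIntegral_ball_fun_norm (R : ℝ) (g : ℝ → ℝ) :
    ∫ x in ball (0 : E) R, g ‖x‖ ∂μ
      = dim E * μ.real (ball 0 1) * ∫ y in Ioo (0 : ℝ) R, y ^ (dim E - 1) * g y := by
  have hball : ∀ x : E, (ball (0 : E) R).indicator (fun x => g ‖x‖) x = (Iio R).indicator g ‖x‖ :=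
    fun x => by simp [indicator]
  have hsmul : ∀ y : ℝ, y ^ (dim E - 1) • (Iio R).indicator g y
      = (Iio R).indicator (fun y => y ^ (dim E - 1) * g y) y :=
    fun y => by simp [indicator]
  rw [← integral_indicator measurableSet_ball, funext hball, integral_fun_norm_addHaar,
    nsmul_eq_mul, smul_eq_mul, mul_assoc, funext hsmul, setIntegral_indicator measurableSet_Iio,
    Ioi_inter_Iio]

lemma setIntegral_ball_logProfile {t R : ℝ} (ht : 0 < t) (htR : t ≤ R) :
    ∫ x in ball (0 : E) R, logProfile (dim E) t ‖x‖ ∂μ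
      = μ.real (ball 0 R) * (1 + Real.log (μ.real (ball 0 t) / μ.real (ball 0 R))) := by
  have hR : 0 < R := ht.trans_le htR
  rw [setIntegral_ball_fun_norm, Measure.addHaar_real_ball μ ht.le,
    Measure.addHaar_real_ball μ hR.le]
  set n := dim E
  have hn : 1 ≤ n := Module.finrank_pos
  have hc : 0 < μ.real (ball (0 : E) 1) :=
    toReal_pos (measure_ball_pos μ _ one_pos).ne' measure_ball_lt_top.ne
  have hinner : EqOn (fun y => y ^ (n - 1) * logProfile n t y) (fun y => y ^ (n - 1))
      (Ioo 0 t) := fun y hy => by simp [logProfile, hy.2]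
  have houter : EqOn (fun y => y ^ (n - 1) * logProfile n t y)
      (fun y => n * y ^ (n - 1) * Real.log (t / y)) (Ico t R) :=
    fun y hy => by simp only [logProfile, if_neg (not_lt.2 hy.1)]; ring
  have hinner_int : IntegrableOn (fun y : ℝ => y ^ (n - 1)) (Ioo 0 t) :=
    (continuous_pow _).integrableOn_Icc.mono_set Ioo_subset_Icc_self
  have houter_int : IntegrableOn (fun y => n * y ^ (n - 1) * Real.log (t / y)) (Ico t R) :=
    (continuousOn_mul_pow_pred_mul_log_div n ht R).integrableOn_Icc.mono_set Ico_subset_Icc_self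
  rw [← Ioo_union_Ico_eq_Ioo ht htR, setIntegral_union
      ((Iio_disjoint_Ici le_rfl).mono Ioo_subset_Iio_self Ico_subset_Ici_self) measurableSet_Ico
      (hinner_int.congr_fun hinner.symm measurableSet_Ioo)
      (houter_int.congr_fun houter.symm measurableSet_Ico),
    setIntegral_congr_fun measurableSet_Ioo hinner, setIntegral_congr_fun measurableSet_Ico houter,
    integral_Ioo_zero_pow_pred hn ht.le, integral_Ico_mul_pow_pred_mul_log_div hn ht htR,
    mul_div_mul_right _ _ hc.ne', ← div_pow, Real.log_pow]
  have : (n : ℝ) ≠ 0 := by positivity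
  field_simp
  ring

lemma lintegral_exp_mul_logProfile {s t : ℝ} (hs : 1 < s) (ht : 0 < t) :
    ∫⁻ x, ENNReal.ofReal (Real.exp (s * logProfile (dim E) t ‖x‖)) ∂μ
      = μ (ball 0 t) * ENNReal.ofReal (Real.exp s + 1 / (s - 1)) := by
  rw [lintegral_fun_norm_addHaar μ _
      (measurable_logProfile _ t |>.const_mul s |>.exp |>.ennreal_ofReal),
    Measure.addHaar_ball μ _ ht.le]
  set n := dim E
  have hn : 1 ≤ n := Module.finrank_pos
  have hn0 : (0 : ℝ) < n := by exact_mod_cast hn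
  have hσ : (n : ℝ) < n * s := lt_mul_of_one_lt_right hn0 hs
  have hinner : EqOn (fun y => ENNReal.ofReal (y ^ (n - 1)) *
      ENNReal.ofReal (Real.exp (s * logProfile n t y)))
      (fun y => ENNReal.ofReal (y ^ (n - 1)) * ENNReal.ofReal (Real.exp s)) (Ioo 0 t) :=
    fun y hy => by simp [logProfile, hy.2]
  have houter : EqOn (fun y => ENNReal.ofReal (y ^ (n - 1)) *
      ENNReal.ofReal (Real.exp (s * logProfile n t y)))
      (fun y => ENNReal.ofReal (y ^ (n - 1) * (t / y) ^ ((n : ℝ) * s))) (Ioi t) := by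
    intro y hy
    have hy0 : 0 < y := ht.trans hy
    simp only [logProfile, if_neg (not_lt.2 (mem_Ioi.1 hy).le)]
    rw [← ENNReal.ofReal_mul (by positivity), Real.rpow_def_of_pos (div_pos ht hy0)]
    ring_nf
  rw [← Ioo_union_Ici_eq_Ioi ht,
    lintegral_union measurableSet_Ici ((Iio_disjoint_Ici le_rfl).mono_left Ioo_subset_Iio_self),
    setLIntegral_congr_fun measurableSet_Ioo hinner, lintegral_mul_const' _ _ ofReal_ne_top,
    lintegral_Ioo_zero_pow_pred hn ht.le,
    ← setLIntegral_congr Ioi_ae_eq_Ici, setLIntegral_congr_fun measurableSet_Ioi houter,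
    lintegral_Ioi_pow_pred_mul_div_rpow hn ht hσ,
    ← ENNReal.ofReal_mul (by positivity), ← ENNReal.ofReal_add (by positivity)
      (div_nonneg (by positivity) (by linarith)), ← ENNReal.ofReal_natCast,
    mul_right_comm, ← ENNReal.ofReal_mul hn0.le, mul_right_comm (ENNReal.ofReal _),
    ← ENNReal.ofReal_mul (by positivity)]
  congr 2
  have : s - 1 ≠ 0 := by linarith
  rw [show (n : ℝ) * s - n = n * (s - 1) by ring]
  field_simp

end Radial

section GeometricMean

variable {E : Type*} [NormedAddCommGroup E] [MeasurableSpace E] (μ : Measure E)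

noncomputable def geometricMean (f : E → ℝ) (x : E) : ℝ :=
  Real.exp ((μ.real (ball 0 ‖x‖))⁻¹ * ∫ y in ball 0 ‖x‖, Real.log (f y) ∂μ)

lemma geometricMean_eq_mul_of_log_ae_eq_add {f g h : E → ℝ} {x : E}
    (hfgh : ∀ᵐ y ∂μ, Real.log (f y) = Real.log (g y) + Real.log (h y))
    (hg : IntegrableOn (fun y => Real.log (g y)) (ball 0 ‖x‖) μ)
    (hh : IntegrableOn (fun y => Real.log (h y)) (ball 0 ‖x‖) μ) :
    geometricMean μ f x = geometricMean μ g x * geometricMean μ h x := by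
  rw [geometricMean, geometricMean, geometricMean, ← Real.exp_add, ← mul_add,
    integral_congr_ae (ae_restrict_of_ae hfgh), integral_add hg hh]

end GeometricMean

section TestFunction

variable {E : Type*} [NormedAddCommGroup E] {v : E → ℝ}

/-- The `if` keeps the function positive where `v` vanishes, since `0⁻¹ = 0`. -/
noncomputable def testFunction (n : ℕ) (t a : ℝ) (v : E → ℝ) (x : E) : ℝ :=
  Real.exp (a * logProfile n t ‖x‖) * if 0 < v x then (v x)⁻¹ else 1

lemma testFunction_pos (n : ℕ) (t a : ℝ) (v : E → ℝ) (x : E) : 0 < testFunction n t a v x := by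
  unfold testFunction
  split_ifs with hv
  exacts [mul_pos (Real.exp_pos _) (inv_pos.2 hv), mul_pos (Real.exp_pos _) one_pos]

variable [MeasurableSpace E] {μ : Measure E} {n : ℕ} {t a : ℝ}

lemma ae_log_testFunction (hvpos : ∀ᵐ x ∂μ, 0 < v x) :
    ∀ᵐ x ∂μ, Real.log (testFunction n t a v x)
      = Real.log (Real.exp (a * logProfile n t ‖x‖)) + Real.log (v x)⁻¹ := by
  filter_upwards [hvpos] with x hx
  rw [testFunction, if_pos hx, Real.log_mul (Real.exp_pos _).ne' (inv_pos.2 hx).ne']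

lemma ae_testFunction_mul (hvpos : ∀ᵐ x ∂μ, 0 < v x) :
    ∀ᵐ x ∂μ, testFunction n t a v x * v x = Real.exp (a * logProfile n t ‖x‖) := by
  filter_upwards [hvpos] with x hx
  rw [testFunction, if_pos hx, mul_assoc, inv_mul_cancel₀ hx.ne', mul_one]

variable [OpensMeasurableSpace E]

lemma measurable_testFunction (n : ℕ) (t a : ℝ) (hv : Measurable v) :
    Measurable (testFunction n t a v) :=
  ((measurable_logProfile n t).comp measurable_norm |>.const_mul a |>.exp).mul
    (Measurable.ite (measurableSet_lt measurable_const hv) hv.inv measurable_const)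

variable [ProperSpace E] [IsFiniteMeasureOnCompacts μ]

lemma integrableOn_ball_log_exp_mul_logProfile (ht : 0 < t) (R : ℝ) :
    IntegrableOn (fun x => Real.log (Real.exp (a * logProfile n t ‖x‖))) (ball (0 : E) R) μ := by
  have := (integrableOn_ball_logProfile μ n ht R).const_mul a
  simp only [Real.log_exp]
  exact this

lemma integrableOn_ball_log_testFunction (ht : 0 < t) (hvpos : ∀ᵐ x ∂μ, 0 < v x) {R : ℝ}
    (hvlog : IntegrableOn (fun y => Real.log (v y)⁻¹) (ball 0 R) μ) :
    IntegrableOn (fun y => Real.log (testFunction n t a v y)) (ball 0 R) μ := by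
  refine ((integrableOn_ball_log_exp_mul_logProfile (n := n) (a := a) ht R).add hvlog).congr ?_
  filter_upwards [ae_restrict_of_ae (ae_log_testFunction hvpos)] with y hy using hy.symm

end TestFunction

section HaarTestFunction

variable {E : Type*} [NormedAddCommGroup E] [NormedSpace ℝ E] [MeasurableSpace E] [BorelSpace E]
  [FiniteDimensional ℝ E] [Nontrivial E] (μ : Measure E) [μ.IsAddHaarMeasure] {v : E → ℝ} {t : ℝ}

lemma geometricMean_exp_mul_logProfile (a : ℝ) (ht : 0 < t) {x : E} (htx : t ≤ ‖x‖) :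
    geometricMean μ (fun y => Real.exp (a * logProfile (dim E) t ‖y‖)) x
      = Real.exp a * (μ.real (ball 0 t) / μ.real (ball 0 ‖x‖)) ^ a := by
  have hVt : 0 < μ.real (ball (0 : E) t) :=
    toReal_pos (measure_ball_pos μ _ ht).ne' measure_ball_lt_top.ne
  have hVx : 0 < μ.real (ball (0 : E) ‖x‖) :=
    toReal_pos (measure_ball_pos μ _ (ht.trans_le htx)).ne' measure_ball_lt_top.ne
  simp only [geometricMean, Real.log_exp]
  rw [integral_const_mul, setIntegral_ball_logProfile μ ht htx,
    Real.rpow_def_of_pos (div_pos hVt hVx), ← Real.exp_add]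
  congr 1
  field_simp

lemma geometricMean_testFunction (hvpos : ∀ᵐ x ∂μ, 0 < v x) (a : ℝ) (ht : 0 < t) {x : E}
    (htx : t ≤ ‖x‖) (hvlog : IntegrableOn (fun y => Real.log (v y)⁻¹) (ball 0 ‖x‖) μ) :
    geometricMean μ (testFunction (dim E) t a v) x
      = Real.exp a * (μ.real (ball 0 t) / μ.real (ball 0 ‖x‖)) ^ a
          * geometricMean μ (fun y => (v y)⁻¹) x := by
  rw [geometricMean_eq_mul_of_log_ae_eq_add μ (ae_log_testFunction hvpos)
      (integrableOn_ball_log_exp_mul_logProfile ht _) hvlog,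
    geometricMean_exp_mul_logProfile μ a ht htx]

lemma ofReal_geometricMean_testFunction_mul (hvpos : ∀ᵐ x ∂μ, 0 < v x) {a : ℝ} (ha : 0 ≤ a)
    (ht : 0 < t) {x : E} (htx : t ≤ ‖x‖)
    (hvlog : IntegrableOn (fun y => Real.log (v y)⁻¹) (ball 0 ‖x‖) μ) (c : ℝ) :
    ENNReal.ofReal (geometricMean μ (testFunction (dim E) t a v) x * c)
      = ENNReal.ofReal (Real.exp a) * μ (ball 0 t) ^ a * (ENNReal.ofReal c
          * μ (ball 0 ‖x‖) ^ (-a) * ENNReal.ofReal (geometricMean μ (fun y => (v y)⁻¹) x)) := by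
  have hVx : 0 < μ.real (ball (0 : E) ‖x‖) :=
    toReal_pos (measure_ball_pos μ _ (ht.trans_le htx)).ne' measure_ball_lt_top.ne
  rw [geometricMean_testFunction μ hvpos a ht htx hvlog,
    ENNReal.ofReal_mul (by unfold geometricMean; positivity),
    ENNReal.ofReal_mul (by positivity), ENNReal.ofReal_mul (by positivity),
    ← ENNReal.ofReal_rpow_of_nonneg (by positivity) ha, ENNReal.ofReal_div_of_pos hVx,
    ofReal_measureReal, ofReal_measureReal, div_eq_mul_inv, ENNReal.mul_rpow_of_nonneg _ _ ha,
    ENNReal.inv_rpow, ← ENNReal.rpow_neg]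
  ring

lemma lintegral_ofReal_testFunction_mul_rpow (hvpos : ∀ᵐ x ∂μ, 0 < v x) {p s : ℝ} (hp : 0 < p)
    (hs : 1 < s) (ht : 0 < t) :
    ∫⁻ x, ENNReal.ofReal (testFunction (dim E) t (s / p) v x * v x) ^ p ∂μ
      = μ (ball 0 t) * ENNReal.ofReal (Real.exp s + 1 / (s - 1)) := by
  rw [← lintegral_exp_mul_logProfile μ hs ht]
  refine lintegral_congr_ae ?_
  filter_upwards [ae_testFunction_mul hvpos] with x hx
  rw [hx, ENNReal.ofReal_rpow_of_nonneg (Real.exp_pos _).le hp.le, ← Real.exp_mul]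
  congr 2
  field_simp

end HaarTestFunction

lemma ENNReal.mul_lintegral_rpow_rpow {α : Type*} [MeasurableSpace α] (μ : Measure α)
    {K : ℝ≥0∞} (hK : K ≠ ⊤) {q : ℝ} (hq : 0 < q) (g : α → ℝ≥0∞) :
    K * (∫⁻ x, g x ^ q ∂μ) ^ (1 / q) = (∫⁻ x, (K * g x) ^ q ∂μ) ^ (1 / q) := by
  simp_rw [ENNReal.mul_rpow_of_nonneg _ _ hq.le]
  rw [lintegral_const_mul' _ _ (ENNReal.rpow_ne_top_of_nonneg hq.le hK),
    ENNReal.mul_rpow_of_nonneg _ _ (by positivity), ← ENNReal.rpow_mul, mul_one_div_cancel hq.ne',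
    ENNReal.rpow_one]

lemma ENNReal.ofReal_mul_rpow_mul_le_of_le_mul_rpow {V D c : ℝ≥0∞} {e k a p : ℝ} (hV₀ : V ≠ 0)
    (hV : V ≠ ⊤) (he : 0 ≤ e) (hk : 0 < k)
    (h : ENNReal.ofReal e * V ^ a * D ≤ c * (V * ENNReal.ofReal k) ^ (1 / p)) :
    ENNReal.ofReal (e * k ^ (-(1 / p))) * (V ^ (a - 1 / p) * D) ≤ c := by
  have hcancel : (V * ENNReal.ofReal k) ^ (1 / p) * (V ^ (-(1 / p)) * ENNReal.ofReal (k ^ (-(1 / p))))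
      = 1 := by
    rw [ENNReal.mul_rpow_of_ne_top hV ofReal_ne_top, ENNReal.ofReal_rpow_of_pos hk,
      mul_mul_mul_comm, ← ENNReal.rpow_add _ _ hV₀ hV, ← ENNReal.ofReal_mul (by positivity),
      ← Real.rpow_add hk]
    simp
  calc ENNReal.ofReal (e * k ^ (-(1 / p))) * (V ^ (a - 1 / p) * D)
      = ENNReal.ofReal e * V ^ a * D * (V ^ (-(1 / p)) * ENNReal.ofReal (k ^ (-(1 / p)))) := by
        rw [ENNReal.ofReal_mul he, sub_eq_add_neg, ENNReal.rpow_add _ _ hV₀ hV]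
        ring
    _ ≤ c * (V * ENNReal.ofReal k) ^ (1 / p) * (V ^ (-(1 / p)) * ENNReal.ofReal (k ^ (-(1 / p)))) :=
        mul_le_mul_left h _
    _ = c := by rw [mul_assoc, hcancel, mul_one]

theorem geometric_mean_two_weight_necessity_general
    (n : ℕ) (hn : 1 ≤ n) (p q : ℝ) (hp : 0 < p) (hpq : p ≤ q)
    (v w : EuclideanSpace ℝ (Fin n) → ℝ)
    (hv : Measurable v) (hvpos : ∀ᵐ x, 0 < v x)
    (hvlog : ∀ r : ℝ, 0 < r →
      IntegrableOn (fun y => Real.log (v y)⁻¹)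
        (ball (0 : EuclideanSpace ℝ (Fin n)) r))
    (C : ℝ)
    (hineq : ∀ f : EuclideanSpace ℝ (Fin n) → ℝ, Measurable f → (∀ x, 0 < f x) →
      (∀ r : ℝ, 0 < r →
        IntegrableOn (fun y => Real.log (f y))
          (ball (0 : EuclideanSpace ℝ (Fin n)) r)) →
      (∫⁻ x, ENNReal.ofReal
            (Real.exp ((volume (ball (0 : EuclideanSpace ℝ (Fin n)) ‖x‖)).toReal⁻¹ *
                ∫ y in ball (0 : EuclideanSpace ℝ (Fin n)) ‖x‖, Real.log (f y)) *
              w x) ^ q) ^ (1 / q)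
        ≤ ENNReal.ofReal C *
          (∫⁻ x, ENNReal.ofReal (f x * v x) ^ p) ^ (1 / p)) :
    ∀ s : ℝ, s ∈ Set.Ioi (1 : ℝ) →
      ENNReal.ofReal
          (Real.exp (s / p) * (Real.exp s + 1 / (s - 1)) ^ (-(1 / p))) *
        (⨆ t ∈ Set.Ioi (0 : ℝ),
          (volume (ball (0 : EuclideanSpace ℝ (Fin n)) t)) ^ ((s - 1) / p) *
          (∫⁻ x in {x : EuclideanSpace ℝ (Fin n) | t < ‖x‖},
              (ENNReal.ofReal (w x) *
                (volume (ball (0 : EuclideanSpace ℝ (Fin n)) ‖x‖)) ^ (-(s / p)) *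
                ENNReal.ofReal
                  (Real.exp
                    ((volume (ball (0 : EuclideanSpace ℝ (Fin n)) ‖x‖)).toReal⁻¹ *
                      ∫ y in ball (0 : EuclideanSpace ℝ (Fin n)) ‖x‖,
                        Real.log (v y)⁻¹))) ^ q) ^ (1 / q))
        ≤ ENNReal.ofReal C := by
  intro s (hs : 1 < s)
  have : Nontrivial (EuclideanSpace ℝ (Fin n)) :=
    have : Nonempty (Fin n) := ⟨⟨0, hn⟩⟩; inferInstance
  have hq : 0 < q := hp.trans_le hpq
  simp only [ENNReal.mul_iSup, iSup_le_iff, mem_Ioi]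
  intro t ht
  set f := testFunction (dim (EuclideanSpace ℝ (Fin n))) t (s / p) v
  have hf := hineq f (measurable_testFunction _ t _ hv) (testFunction_pos _ t _ v)
    fun r hr => integrableOn_ball_log_testFunction ht hvpos (hvlog r hr)
  rw [lintegral_ofReal_testFunction_mul_rpow volume hvpos hp hs ht] at hf
  rw [sub_div]
  refine ENNReal.ofReal_mul_rpow_mul_le_of_le_mul_rpow (measure_ball_pos volume _ ht).ne'
    measure_ball_lt_top.ne (Real.exp_pos _).le (by have := sub_pos.2 hs; positivity)
    (le_trans ?_ hf)
  rw [ENNReal.mul_lintegral_rpow_rpow _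
    (mul_ne_top ofReal_ne_top (rpow_ne_top_of_nonneg (by positivity) measure_ball_lt_top.ne)) hq]
  refine ENNReal.rpow_le_rpow ((setLIntegral_congr_fun (measurableSet_lt measurable_const
    measurable_norm) fun x (hx : t < ‖x‖) => ?_).trans_le (setLIntegral_le_lintegral _ _))
    (by positivity)
  exact congrArg (· ^ q) (ofReal_geometricMean_testFunction_mul volume hvpos (by positivity) ht
    hx.le (hvlog _ (ht.trans hx)) (w x)).symm

/-- Necessity half, with explicit lower bound
`e^{s/p} (e^s + 1/(s-1))^{-1/p} D(s) ≤ C`, of the two-weight criterion for the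
multidimensional geometric mean operator (constant-exponent case of Theorem 3
of the paper). -/
theorem geometric_mean_two_weight_necessity
    (n : ℕ) (hn : 1 ≤ n) (p q : ℝ) (hp : 0 < p) (hpq : p ≤ q)
    (v w : EuclideanSpace ℝ (Fin n) → ℝ)
    (hv : Measurable v) (hv0 : ∀ x, 0 ≤ v x) (hvpos : ∀ᵐ x, 0 < v x)
    (hw : Measurable w) (hw0 : ∀ x, 0 ≤ w x) (hwpos : ∀ᵐ x, 0 < w x)
    (hvlog : ∀ r : ℝ, 0 < r →
      IntegrableOn (fun y => Real.log (v y)⁻¹)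
        (ball (0 : EuclideanSpace ℝ (Fin n)) r))
    (C : ℝ) (hC : 0 < C)
    (hineq : ∀ f : EuclideanSpace ℝ (Fin n) → ℝ, Measurable f → (∀ x, 0 < f x) →
      (∀ r : ℝ, 0 < r →
        IntegrableOn (fun y => Real.log (f y))
          (ball (0 : EuclideanSpace ℝ (Fin n)) r)) →
      (∫⁻ x, ENNReal.ofReal
            (Real.exp ((volume (ball (0 : EuclideanSpace ℝ (Fin n)) ‖x‖)).toReal⁻¹ *
                ∫ y in ball (0 : EuclideanSpace ℝ (Fin n)) ‖x‖, Real.log (f y)) *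
              w x) ^ q) ^ (1 / q)
        ≤ ENNReal.ofReal C *
          (∫⁻ x, ENNReal.ofReal (f x * v x) ^ p) ^ (1 / p)) :
    ∀ s : ℝ, s ∈ Set.Ioi (1 : ℝ) →
      ENNReal.ofReal
          (Real.exp (s / p) * (Real.exp s + 1 / (s - 1)) ^ (-(1 / p))) *
        (⨆ t ∈ Set.Ioi (0 : ℝ),
          (volume (ball (0 : EuclideanSpace ℝ (Fin n)) t)) ^ ((s - 1) / p) *
          (∫⁻ x in {x : EuclideanSpace ℝ (Fin n) | t < ‖x‖},
              (ENNReal.ofReal (w x) *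
                (volume (ball (0 : EuclideanSpace ℝ (Fin n)) ‖x‖)) ^ (-(s / p)) *
                ENNReal.ofReal
                  (Real.exp
                    ((volume (ball (0 : EuclideanSpace ℝ (Fin n)) ‖x‖)).toReal⁻¹ *
                      ∫ y in ball (0 : EuclideanSpace ℝ (Fin n)) ‖x‖,
                        Real.log (v y)⁻¹))) ^ q) ^ (1 / q))
        ≤ ENNReal.ofReal C :=
  geometric_mean_two_weight_necessity_general n hn p q hp hpq v w hv hvpos hvlog C hineq
end

section
/- Let 0 < p < ∞ and β ∈ ℝ, and let f be a positive measurable function on (0,∞) with ln f locally integrable. Then ∫_0^∞ exp( (p/x) ∫_0^x ln f(t) dt ) · x^{βp} dx ≤ e^{βp + 1} · ∫_0^∞ f(x)^p · x^{βp} dx; that is, the one-dimensional weighted Pólya–Knopp inequality ∫_0^∞ (Gf(x))^p x^{βp} dx ≤ C^p ∫_0^∞ f(x)^p x^{βp} dx holds with C = e^{β + 1/p}. -/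
open MeasureTheory ENNReal Set

/-!
Jensen's inequality for `exp` on `(0, x)`, applied to `p log f(t) + c log t` with `c = βp + 1`,
gives `Gf(x)^p x^c ≤ e^c ⨍_{(0,x)} f^p t^c`. Integrating against `dx / x` and exchanging the order
of integration turns the right-hand side into `e^c ∫_0^∞ f(t)^p t^c (∫_t^∞ x⁻² dx) dt`, and
`∫_t^∞ x⁻² dx = t⁻¹` brings the weight back to `t^{βp}`.
-/

theorem ofReal_exp_average_le_laverage {α : Type*} [MeasurableSpace α] {μ : Measure α}
    [IsFiniteMeasure μ] [NeZero μ] {φ : α → ℝ} (hφ : Integrable φ μ) :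
    ENNReal.ofReal (Real.exp (⨍ a, φ a ∂μ)) ≤ ⨍⁻ a, ENNReal.ofReal (Real.exp (φ a)) ∂μ := by
  by_cases hexp : Integrable (fun a => Real.exp (φ a)) μ
  · rw [laverage_eq, ← ofReal_average hexp (.of_forall fun a => (Real.exp_pos _).le)]
    exact ofReal_le_ofReal <| convexOn_exp.map_average_le Real.continuous_exp.continuousOn
      isClosed_univ (.of_forall fun _ => mem_univ _) hφ hexp
  · have htop : ∫⁻ a, ENNReal.ofReal (Real.exp (φ a)) ∂μ = ∞ := by
      contrapose! hexp
      exact (lintegral_ofReal_ne_top_iff_integrable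
        (Real.continuous_exp.comp_aestronglyMeasurable hφ.1)
        (.of_forall fun a => (Real.exp_pos _).le)).1 hexp
    rw [laverage_eq, htop, top_div_of_ne_top (measure_ne_top μ univ)]
    exact le_top

theorem integrableOn_log_Ioo (x : ℝ) : IntegrableOn Real.log (Ioo 0 x) :=
  intervalIntegral.intervalIntegrable_log'.1.mono_set Ioo_subset_Ioc_self

theorem integral_log_Ioo {x : ℝ} (hx : 0 ≤ x) :
    ∫ t in Ioo 0 x, Real.log t = x * Real.log x - x := by
  rw [← integral_Ioc_eq_integral_Ioo, ← intervalIntegral.integral_of_le hx, integral_log]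
  simp

theorem ofReal_exp_setIntegral_log_mul_rpow_le {f : ℝ → ℝ} {x : ℝ} (hx : 0 < x)
    (hfpos : ∀ t ∈ Ioo 0 x, 0 < f t)
    (hflog : IntegrableOn (fun t => Real.log (f t)) (Ioo 0 x)) (p c : ℝ) :
    ENNReal.ofReal (Real.exp ((p / x) * ∫ t in Ioo 0 x, Real.log (f t)) * x ^ c)
      ≤ ENNReal.ofReal (Real.exp c) *
        ⨍⁻ t in Ioo 0 x, ENNReal.ofReal (f t ^ p * t ^ c) ∂volume := by
  have : NeZero (volume.restrict (Ioo 0 x)) := ⟨by simpa [Measure.restrict_eq_zero] using hx⟩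
  set φ : ℝ → ℝ := fun t => p * Real.log (f t) + c * Real.log t
  have hφ : IntegrableOn φ (Ioo 0 x) :=
    (hflog.const_mul p).add ((integrableOn_log_Ioo x).const_mul c)
  have average_φ : ⨍ t in Ioo 0 x, φ t
      = (p / x) * (∫ t in Ioo 0 x, Real.log (f t)) + c * (Real.log x - 1) := by
    rw [setAverage_eq, integral_add (hflog.const_mul p) ((integrableOn_log_Ioo x).const_mul c),
      integral_const_mul, integral_const_mul, integral_log_Ioo hx.le,
      Real.volume_real_Ioo_of_le hx.le, sub_zero, smul_eq_mul]
    field_simp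
  have exp_φ : ∀ t ∈ Ioo 0 x, Real.exp (φ t) = f t ^ p * t ^ c := fun t ht => by
    rw [Real.exp_add, Real.rpow_def_of_pos (hfpos t ht), Real.rpow_def_of_pos ht.1, mul_comm p,
      mul_comm c]
  calc ENNReal.ofReal (Real.exp ((p / x) * ∫ t in Ioo 0 x, Real.log (f t)) * x ^ c)
      = ENNReal.ofReal (Real.exp c) * ENNReal.ofReal (Real.exp (⨍ t in Ioo 0 x, φ t)) := by
        rw [← ENNReal.ofReal_mul (Real.exp_pos c).le, average_φ, Real.rpow_def_of_pos hx]
        congr 1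
        rw [← Real.exp_add, ← Real.exp_add]
        ring_nf
    _ ≤ ENNReal.ofReal (Real.exp c) *
          ⨍⁻ t in Ioo 0 x, ENNReal.ofReal (Real.exp (φ t)) ∂volume := by
        gcongr
        exact ofReal_exp_average_le_laverage hφ
    _ = ENNReal.ofReal (Real.exp c) *
          ⨍⁻ t in Ioo 0 x, ENNReal.ofReal (f t ^ p * t ^ c) ∂volume := by
        rw [setLAverage_congr_fun measurableSet_Ioo fun t ht => by rw [exp_φ t ht]]

theorem lintegral_Ioi_rpow_of_lt {b t : ℝ} (hb : b < -1) (ht : 0 < t) :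
    ∫⁻ x in Ioi t, ENNReal.ofReal (x ^ b) = ENNReal.ofReal (-t ^ (b + 1) / (b + 1)) := by
  rw [← ofReal_integral_eq_lintegral_ofReal (integrableOn_Ioi_rpow_of_lt hb ht)
    (ae_restrict_of_forall_mem measurableSet_Ioi fun x hx => Real.rpow_nonneg (ht.trans hx).le _),
    integral_Ioi_rpow_of_lt hb ht]

theorem lintegral_Ioi_rpow_mul_setLAverage_Ioo {F : ℝ → ℝ≥0∞} (hF : Measurable F) {a : ℝ}
    (ha : a < 0) :
    ∫⁻ x in Ioi 0, ENNReal.ofReal (x ^ a) * ⨍⁻ t in Ioo 0 x, F t ∂volume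
      = ENNReal.ofReal (-a⁻¹) * ∫⁻ t in Ioi 0, ENNReal.ofReal (t ^ a) * F t := by
  set K : ℝ × ℝ → ℝ≥0∞ :=
    {q | q.2 < q.1}.indicator fun q => ENNReal.ofReal (q.1 ^ (a - 1)) * F q.2
  have hK : Measurable K :=
    ((measurable_fst.pow_const _).ennreal_ofReal.mul (hF.comp measurable_snd)).indicator
      (measurableSet_lt measurable_snd measurable_fst)
  have integral_K_snd (x : ℝ) (hx : x ∈ Ioi 0) :
      ENNReal.ofReal (x ^ a) * ⨍⁻ t in Ioo 0 x, F t ∂volume = ∫⁻ t in Ioi 0, K (x, t) := by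
    change _ = ∫⁻ t in Ioi 0, (Iio x).indicator (fun t => ENNReal.ofReal (x ^ (a - 1)) * F t) t
    rw [lintegral_indicator measurableSet_Iio, Measure.restrict_restrict measurableSet_Iio,
      Iio_inter_Ioi, lintegral_const_mul' _ _ ofReal_ne_top, setLAverage_eq, Real.volume_Ioo,
      sub_zero, ENNReal.div_eq_inv_mul, ← mul_assoc, ← ofReal_inv_of_pos hx,
      ← ofReal_mul (Real.rpow_nonneg (le_of_lt hx) _), ← div_eq_mul_inv,
      ← Real.rpow_sub_one hx.ne']
  have integral_K_fst (t : ℝ) (ht : t ∈ Ioi 0) :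
      ∫⁻ x in Ioi 0, K (x, t) = ENNReal.ofReal (-a⁻¹) * (ENNReal.ofReal (t ^ a) * F t) := by
    change ∫⁻ x in Ioi 0, (Ioi t).indicator (fun x => ENNReal.ofReal (x ^ (a - 1)) * F t) x = _
    rw [lintegral_indicator measurableSet_Ioi, Measure.restrict_restrict measurableSet_Ioi,
      Ioi_inter_Ioi, max_eq_left (le_of_lt ht),
      lintegral_mul_const _ (by fun_prop : Measurable fun x : ℝ => ENNReal.ofReal (x ^ (a - 1))),
      lintegral_Ioi_rpow_of_lt (by linarith) ht, ← mul_assoc,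
      ← ofReal_mul (by simpa using ha.le)]
    congr 2
    field_simp
    ring_nf
  calc ∫⁻ x in Ioi 0, ENNReal.ofReal (x ^ a) * ⨍⁻ t in Ioo 0 x, F t ∂volume
      = ∫⁻ x in Ioi 0, ∫⁻ t in Ioi 0, K (x, t) :=
        setLIntegral_congr_fun measurableSet_Ioi integral_K_snd
    _ = ∫⁻ t in Ioi 0, ∫⁻ x in Ioi 0, K (x, t) := lintegral_lintegral_swap hK.aemeasurable
    _ = ∫⁻ t in Ioi 0, ENNReal.ofReal (-a⁻¹) * (ENNReal.ofReal (t ^ a) * F t) :=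
        setLIntegral_congr_fun measurableSet_Ioi integral_K_fst
    _ = ENNReal.ofReal (-a⁻¹) * ∫⁻ t in Ioi 0, ENNReal.ofReal (t ^ a) * F t :=
        lintegral_const_mul' _ _ ofReal_ne_top

theorem ofReal_mul_rpow_eq_rpow_neg_one_mul {x : ℝ} (hx : 0 < x) (g b : ℝ) :
    ENNReal.ofReal (g * x ^ b)
      = ENNReal.ofReal (x ^ (-1 : ℝ)) * ENNReal.ofReal (g * x ^ (b + 1)) := by
  rw [← ofReal_mul (Real.rpow_nonneg hx.le _), Real.rpow_add_one hx.ne', Real.rpow_neg_one]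
  field_simp

theorem polya_knopp_power_weight_general
    (p β : ℝ) (f : ℝ → ℝ) (hf : Measurable f)
    (hfpos : ∀ x ∈ Set.Ioi (0 : ℝ), 0 < f x)
    (hflog : ∀ x : ℝ, 0 < x →
      IntegrableOn (fun t => Real.log (f t)) (Set.Ioo (0 : ℝ) x)) :
    ∫⁻ x in Set.Ioi (0 : ℝ),
        ENNReal.ofReal
          (Real.exp ((p / x) * ∫ t in Set.Ioo (0 : ℝ) x, Real.log (f t)) *
            x ^ (β * p))
      ≤ ENNReal.ofReal (Real.exp (β * p + 1)) *
        ∫⁻ x in Set.Ioi (0 : ℝ), ENNReal.ofReal (f x ^ p * x ^ (β * p)) := by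
  set F : ℝ → ℝ≥0∞ := fun t => ENNReal.ofReal (f t ^ p * t ^ (β * p + 1))
  have hF : Measurable F := by fun_prop
  calc _ ≤ ∫⁻ x in Ioi 0, ENNReal.ofReal (Real.exp (β * p + 1)) *
          (ENNReal.ofReal (x ^ (-1 : ℝ)) * ⨍⁻ t in Ioo 0 x, F t ∂volume) := by
        refine setLIntegral_mono' measurableSet_Ioi fun x (hx : 0 < x) => ?_
        rw [ofReal_mul_rpow_eq_rpow_neg_one_mul hx, mul_left_comm]
        gcongr
        exact ofReal_exp_setIntegral_log_mul_rpow_le hx (fun t ht => hfpos t ht.1) (hflog x hx) p _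
    _ = ENNReal.ofReal (Real.exp (β * p + 1)) *
          ∫⁻ x in Ioi 0, ENNReal.ofReal (x ^ (-1 : ℝ)) * F x := by
        rw [lintegral_const_mul' _ _ ofReal_ne_top,
          lintegral_Ioi_rpow_mul_setLAverage_Ioo hF (by norm_num : (-1 : ℝ) < 0)]
        norm_num
    _ = _ := by
        congr 1
        exact setLIntegral_congr_fun measurableSet_Ioi fun x (hx : 0 < x) =>
          (ofReal_mul_rpow_eq_rpow_neg_one_mul hx _ _).symm

/-- The one-dimensional weighted Pólya–Knopp inequality
`∫_0^∞ (Gf(x))^p x^{βp} dx ≤ e^{βp+1} ∫_0^∞ f(x)^p x^{βp} dx`, where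
`Gf(x) = exp((1/x)∫_0^x ln f)`; case `n = 1`, `p = q`, `γ = β` of Corollary 1
and Remark 3 of the paper. -/
theorem polya_knopp_power_weight
    (p β : ℝ) (hp : 0 < p) (f : ℝ → ℝ) (hf : Measurable f)
    (hfpos : ∀ x ∈ Set.Ioi (0 : ℝ), 0 < f x)
    (hflog : ∀ x : ℝ, 0 < x →
      IntegrableOn (fun t => Real.log (f t)) (Set.Ioo (0 : ℝ) x)) :
    ∫⁻ x in Set.Ioi (0 : ℝ),
        ENNReal.ofReal
          (Real.exp ((p / x) * ∫ t in Set.Ioo (0 : ℝ) x, Real.log (f t)) *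
            x ^ (β * p))
      ≤ ENNReal.ofReal (Real.exp (β * p + 1)) *
        ∫⁻ x in Set.Ioi (0 : ℝ), ENNReal.ofReal (f x ^ p * x ^ (β * p)) :=
  polya_knopp_power_weight_general p β f hf hfpos hflog
end

section
/- Let 1 < p ≤ q < ∞ with p' = p/(p-1), let ω₁, ω₂ be weights on (0,∞), and let λ > 0. Suppose y is locally absolutely continuous on (0,∞) with y(t) > 0 and y'(t) > 0 for all t, and y satisfies the nonlinear integro-differential equation (∫_t^∞ (ω₂(x) · y(x)^{1/p'})^q dx)^{1/q} = λ · ω₁(t) · (y'(t))^{1/p'} for every t > 0. Then for every locally absolutely continuous u on (0,∞) with lim_{t→0⁺} u(t) = 0, the weighted norm inequality (∫_0^∞ (|u(x)| · ω₂(x))^q dx)^{1/q} ≤ λ · (∫_0^∞ (|u'(x)| · ω₁(x))^p dx)^{1/p} holds. -/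
open MeasureTheory ENNReal Set Filter Topology

/-!
Write `ψ = (|u'| y'^{-1/p'})^p`, `Q x = ∫_0^x ψ` and `W = (ω₂ y^{1/p'})^q`. Hölder's inequality
applied to `|u x| ≤ ∫_0^x |u'| = ∫_0^x (|u'| y'^{-1/p'}) y'^{1/p'}` gives
`|u x| ≤ Q(x)^{1/p} y(x)^{1/p'}`, hence `(|u| ω₂)^q ≤ W Q^{q/p}`. Minkowski's integral inequality
in `L^{q/p}(W)` for the Hardy operator gives `∫ W Q^{q/p} ≤ (∫ ψ(t) (∫_t^∞ W)^{p/q} dt)^{q/p}`,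
and the equation for `y` says precisely that `ψ(t) (∫_t^∞ W)^{p/q} = λ^p (|u'(t)| ω₁(t))^p`.
-/

lemma volume_image_le_lintegral_abs_deriv {f f' : ℝ → ℝ} {s : Set ℝ} (hs : MeasurableSet s)
    (hf : ∀ x ∈ s, HasDerivWithinAt f (f' x) s x) :
    volume (f '' s) ≤ ∫⁻ x in s, ENNReal.ofReal |f' x| := by
  simpa only [ContinuousLinearMap.det_toSpanSingleton] using
    addHaar_image_le_lintegral_abs_det_fderiv volume hs fun x hx => (hf x hx).hasFDerivWithinAt

lemma ofReal_abs_le_volume_image_Ioc {u : ℝ → ℝ} {x : ℝ} (hx : 0 < x)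
    (hu : ContinuousOn u (Ioc 0 x)) (hu0 : Tendsto u (𝓝[>] 0) (𝓝 0)) :
    ENNReal.ofReal |u x| ≤ volume (u '' Ioc 0 x) := by
  have hsub : ∀ a ∈ Ioo 0 x, ENNReal.ofReal |u x - u a| ≤ volume (u '' Ioc 0 x) := by
    intro a ha
    have hIcc : uIcc a x ⊆ Ioc 0 x := by
      rw [uIcc_of_le ha.2.le]; exact Icc_subset_Ioc ha.1 le_rfl
    calc ENNReal.ofReal |u x - u a| = volume (uIcc (u a) (u x)) := Real.volume_interval.symm
      _ ≤ volume (u '' uIcc a x) := measure_mono (intermediate_value_uIcc (hu.mono hIcc))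
      _ ≤ volume (u '' Ioc 0 x) := measure_mono (image_mono hIcc)
  have hlim : Tendsto (fun a => ENNReal.ofReal |u x - u a|) (𝓝[>] 0)
      (𝓝 (ENNReal.ofReal |u x - 0|)) :=
    (ENNReal.continuous_ofReal.tendsto _).comp ((tendsto_const_nhds.sub hu0).abs)
  rw [sub_zero] at hlim
  exact le_of_tendsto hlim (eventually_of_mem (Ioo_mem_nhdsGT hx) hsub)

-- Through the area formula rather than the fundamental theorem of calculus, so that no
-- integrability of `u'` is needed.
lemma ofReal_abs_le_lintegral_Ioo_abs_deriv {u u' : ℝ → ℝ} {x : ℝ} (hx : 0 < x)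
    (hu : ∀ t ∈ Ioi 0, HasDerivAt u (u' t) t) (hu0 : Tendsto u (𝓝[>] 0) (𝓝 0)) :
    ENNReal.ofReal |u x| ≤ ∫⁻ t in Ioo 0 x, ENNReal.ofReal |u' t| :=
  calc ENNReal.ofReal |u x| ≤ volume (u '' Ioc 0 x) := ofReal_abs_le_volume_image_Ioc hx
        (fun t ht => (hu t ht.1).continuousAt.continuousWithinAt) hu0
    _ ≤ ∫⁻ t in Ioc 0 x, ENNReal.ofReal |u' t| := volume_image_le_lintegral_abs_deriv
        measurableSet_Ioc fun t ht => (hu t ht.1).hasDerivWithinAt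
    _ = ∫⁻ t in Ioo 0 x, ENNReal.ofReal |u' t| := setLIntegral_congr Ioo_ae_eq_Ioc.symm

lemma lintegral_Ioo_ofReal_deriv_le {y y' : ℝ → ℝ} {a b : ℝ}
    (hy : ∀ t ∈ Ioc a b, HasDerivAt y (y' t) t) (hy' : ∀ t ∈ Ioo a b, 0 ≤ y' t)
    (hpos : ∀ t ∈ Ioo a b, 0 ≤ y t) :
    ∫⁻ t in Ioo a b, ENNReal.ofReal (y' t) ≤ ENNReal.ofReal (y b) := by
  have hmono : MonotoneOn y (Ioc a b) :=
    monotoneOn_of_hasDerivWithinAt_nonneg (f' := y') (convex_Ioc a b)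
      (fun t ht => (hy t ht).continuousAt.continuousWithinAt)
      (by simpa only [interior_Ioc] using
        fun t ht => (hy t (Ioo_subset_Ioc_self ht)).hasDerivWithinAt)
      (by simpa only [interior_Ioc] using hy')
  rw [lintegral_deriv_eq_volume_image_of_monotoneOn measurableSet_Ioo
    (fun t ht => (hy t (Ioo_subset_Ioc_self ht)).hasDerivWithinAt)
    (hmono.mono Ioo_subset_Ioc_self)]
  calc volume (y '' Ioo a b) ≤ volume (Icc 0 (y b)) := by
        refine measure_mono (image_subset_iff.2 fun t ht => ⟨hpos t ht, ?_⟩)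
        exact hmono (Ioo_subset_Ioc_self ht) (right_mem_Ioc.2 (ht.1.trans ht.2)) ht.2.le
    _ = ENNReal.ofReal (y b) := by rw [Real.volume_Icc, sub_zero]

lemma aemeasurable_of_hasDerivAt {f f' : ℝ → ℝ} {μ : Measure ℝ} {s : Set ℝ}
    (hs : MeasurableSet s) (hf : ∀ x ∈ s, HasDerivAt f (f' x) x) :
    AEMeasurable f' (μ.restrict s) :=
  (measurable_deriv f).aemeasurable.congr
    ((ae_restrict_iff' hs).2 (ae_of_all _ fun x hx => (hf x hx).deriv))

lemma ofReal_abs_le_lintegral_rpow_mul_rpow {p p' : ℝ} (hpp' : p.HolderConjugate p')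
    {u u' y y' : ℝ → ℝ} {x : ℝ} (hx : 0 < x)
    (hu : ∀ t ∈ Ioi 0, HasDerivAt u (u' t) t) (hu0 : Tendsto u (𝓝[>] 0) (𝓝 0))
    (hy : ∀ t ∈ Ioi 0, HasDerivAt y (y' t) t) (hy_pos : ∀ t ∈ Ioi 0, 0 < y t)
    (hy'_pos : ∀ t ∈ Ioi 0, 0 < y' t) :
    ENNReal.ofReal |u x|
      ≤ (∫⁻ t in Ioo 0 x, ENNReal.ofReal (|u' t| * y' t ^ (-(1 / p'))) ^ p) ^ (1 / p)
        * ENNReal.ofReal (y x) ^ (1 / p') := by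
  have hsub : Ioo 0 x ⊆ Ioi 0 := Ioo_subset_Ioi_self
  have hu' := (aemeasurable_of_hasDerivAt (μ := volume) measurableSet_Ioi hu).mono_measure
    (Measure.restrict_mono hsub le_rfl)
  have hy' := (aemeasurable_of_hasDerivAt (μ := volume) measurableSet_Ioi hy).mono_measure
    (Measure.restrict_mono hsub le_rfl)
  have hsplit : ∀ t ∈ Ioo 0 x, ENNReal.ofReal |u' t|
      = ENNReal.ofReal (|u' t| * y' t ^ (-(1 / p'))) * ENNReal.ofReal (y' t ^ (1 / p')) := by
    intro t ht
    have hy't := hy'_pos t (hsub ht)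
    rw [← ENNReal.ofReal_mul (by positivity), mul_assoc, ← Real.rpow_add hy't, neg_add_cancel,
      Real.rpow_zero, mul_one]
  have hy'_rpow : ∀ t ∈ Ioo 0 x, ENNReal.ofReal (y' t ^ (1 / p')) ^ p' = ENNReal.ofReal (y' t) := by
    intro t ht
    have hy't := hy'_pos t (hsub ht)
    rw [ENNReal.ofReal_rpow_of_nonneg (by positivity) hpp'.symm.nonneg, ← Real.rpow_mul hy't.le,
      one_div_mul_cancel hpp'.symm.ne_zero, Real.rpow_one]
  calc ENNReal.ofReal |u x| ≤ ∫⁻ t in Ioo 0 x, ENNReal.ofReal |u' t| :=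
        ofReal_abs_le_lintegral_Ioo_abs_deriv hx hu hu0
    _ = ∫⁻ t in Ioo 0 x, ENNReal.ofReal (|u' t| * y' t ^ (-(1 / p')))
          * ENNReal.ofReal (y' t ^ (1 / p')) := setLIntegral_congr_fun measurableSet_Ioo hsplit
    _ ≤ (∫⁻ t in Ioo 0 x, ENNReal.ofReal (|u' t| * y' t ^ (-(1 / p'))) ^ p) ^ (1 / p)
          * (∫⁻ t in Ioo 0 x, ENNReal.ofReal (y' t ^ (1 / p')) ^ p') ^ (1 / p') :=
        ENNReal.lintegral_mul_le_Lp_mul_Lq _ hpp'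
          ((hu'.abs.mul (hy'.pow aemeasurable_const)).ennreal_ofReal)
          ((hy'.pow aemeasurable_const).ennreal_ofReal)
    _ ≤ _ := by
        rw [setLIntegral_congr_fun measurableSet_Ioo hy'_rpow]
        refine mul_le_mul' le_rfl (ENNReal.rpow_le_rpow ?_ (one_div_nonneg.2 hpp'.symm.nonneg))
        exact lintegral_Ioo_ofReal_deriv_le (fun t ht => hy t ht.1)
          (fun t ht => (hy'_pos t (hsub ht)).le) (fun t ht => (hy_pos t (hsub ht)).le)

lemma ofReal_abs_mul_rpow_le_rpow_mul_lintegral_rpow {p p' q : ℝ} (hpp' : p.HolderConjugate p')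
    (hq : 0 ≤ q) {u u' y y' : ℝ → ℝ} {x : ℝ} (w : ℝ) (hx : 0 < x)
    (hu : ∀ t ∈ Ioi 0, HasDerivAt u (u' t) t) (hu0 : Tendsto u (𝓝[>] 0) (𝓝 0))
    (hy : ∀ t ∈ Ioi 0, HasDerivAt y (y' t) t) (hy_pos : ∀ t ∈ Ioi 0, 0 < y t)
    (hy'_pos : ∀ t ∈ Ioi 0, 0 < y' t) :
    ENNReal.ofReal (|u x| * w) ^ q
      ≤ ENNReal.ofReal (w * y x ^ (1 / p')) ^ q
        * (∫⁻ t in Ioo 0 x, ENNReal.ofReal (|u' t| * y' t ^ (-(1 / p'))) ^ p) ^ (q / p) := by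
  set Q := ∫⁻ t in Ioo 0 x, ENNReal.ofReal (|u' t| * y' t ^ (-(1 / p'))) ^ p
  have hyx := hy_pos x hx
  calc ENNReal.ofReal (|u x| * w) ^ q = (ENNReal.ofReal |u x| * ENNReal.ofReal w) ^ q := by
        rw [ENNReal.ofReal_mul (abs_nonneg _)]
    _ ≤ (Q ^ (1 / p) * ENNReal.ofReal (y x) ^ (1 / p') * ENNReal.ofReal w) ^ q := by
        gcongr
        exact ofReal_abs_le_lintegral_rpow_mul_rpow hpp' hx hu hu0 hy hy_pos hy'_pos
    _ = ENNReal.ofReal (w * y x ^ (1 / p')) ^ q * Q ^ (q / p) := by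
        rw [ENNReal.ofReal_mul' (by positivity), ENNReal.mul_rpow_of_nonneg _ _ hq,
          ENNReal.mul_rpow_of_nonneg _ _ hq, ENNReal.mul_rpow_of_nonneg _ _ hq,
          ← ENNReal.rpow_mul Q, one_div_mul_eq_div,
          ENNReal.ofReal_rpow_of_nonneg hyx.le (one_div_nonneg.2 hpp'.symm.nonneg)]
        ring

lemma lintegral_Ioi_mul_lintegral_Ioo_eq {ψ V : ℝ → ℝ≥0∞}
    (hψ : AEMeasurable ψ (volume.restrict (Ioi 0)))
    (hV : AEMeasurable V (volume.restrict (Ioi 0))) :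
    ∫⁻ x in Ioi 0, V x * ∫⁻ t in Ioo 0 x, ψ t = ∫⁻ t in Ioi 0, ψ t * ∫⁻ x in Ioi t, V x := by
  let K : ℝ × ℝ → ℝ≥0∞ := {z | z.2 < z.1}.indicator fun z => V z.1 * ψ z.2
  have hK : AEMeasurable K ((volume.restrict (Ioi 0)).prod (volume.restrict (Ioi 0))) :=
    (hV.comp_fst.mul hψ.comp_snd).indicator (measurableSet_lt measurable_snd measurable_fst)
  have hrow : ∀ x, ∫⁻ t in Ioi 0, K (x, t) = V x * ∫⁻ t in Ioo 0 x, ψ t := by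
    intro x
    have : (fun t => K (x, t)) = (Iio x).indicator fun t => V x * ψ t := rfl
    rw [this, lintegral_indicator measurableSet_Iio, Measure.restrict_restrict measurableSet_Iio,
      Iio_inter_Ioi, lintegral_const_mul'' _ (hψ.mono_measure (Measure.restrict_mono
        Ioo_subset_Ioi_self le_rfl))]
  have hcol : ∀ t ∈ Ioi (0 : ℝ), ∫⁻ x in Ioi 0, K (x, t) = ψ t * ∫⁻ x in Ioi t, V x := by
    intro t ht
    have : (fun x => K (x, t)) = (Ioi t).indicator fun x => ψ t * V x := by
      ext x; simp only [K, indicator, mem_Ioi, mul_comm]; rfl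
    rw [this, lintegral_indicator measurableSet_Ioi, Measure.restrict_restrict measurableSet_Ioi,
      inter_eq_left.2 (Ioi_subset_Ioi (le_of_lt ht)), lintegral_const_mul'' _
        (hV.mono_measure (Measure.restrict_mono (Ioi_subset_Ioi (le_of_lt ht)) le_rfl))]
  simp_rw [← hrow]
  rw [lintegral_lintegral_swap (f := fun x t => K (x, t)) hK]
  exact setLIntegral_congr_fun measurableSet_Ioi hcol

lemma lintegral_mul_rpow_sub_one_le {α : Type*} [MeasurableSpace α] (μ : Measure α)
    {W R : α → ℝ≥0∞} (hW : AEMeasurable W μ) (hR : AEMeasurable R μ) {m : ℝ} (hm : 1 < m) :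
    ∫⁻ x, W x * R x ^ (m - 1) ∂μ
      ≤ (∫⁻ x, W x * R x ^ m ∂μ) ^ ((m - 1) / m) * (∫⁻ x, W x ∂μ) ^ m⁻¹ := by
  have hm0 : 0 < m := by linarith
  have hm1 : 0 < m - 1 := by linarith
  have hconj : (m / (m - 1)).HolderConjugate m := (Real.HolderConjugate.conjExponent hm).symm
  have hsplit : ∀ x, W x * R x ^ (m - 1) = W x ^ ((m - 1) / m) * R x ^ (m - 1) * W x ^ m⁻¹ := by
    intro x
    rw [mul_right_comm, ← ENNReal.rpow_add_of_nonneg _ _ (by positivity) (by positivity),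
      show (m - 1) / m + m⁻¹ = 1 by field_simp; ring, ENNReal.rpow_one]
  have hf : ∀ x, (W x ^ ((m - 1) / m) * R x ^ (m - 1)) ^ (m / (m - 1)) = W x * R x ^ m := by
    intro x
    rw [ENNReal.mul_rpow_of_nonneg _ _ (by positivity), ← ENNReal.rpow_mul, ← ENNReal.rpow_mul,
      show (m - 1) / m * (m / (m - 1)) = 1 by field_simp, ENNReal.rpow_one,
      show (m - 1) * (m / (m - 1)) = m by field_simp]
  have hg : ∀ x, (W x ^ m⁻¹) ^ m = W x := fun x => by
    rw [← ENNReal.rpow_mul, inv_mul_cancel₀ hm0.ne', ENNReal.rpow_one]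
  have := lintegral_mul_le_Lp_mul_Lq μ hconj
    (f := fun x => W x ^ ((m - 1) / m) * R x ^ (m - 1)) (g := fun x => W x ^ m⁻¹)
    ((hW.pow aemeasurable_const).mul (hR.pow aemeasurable_const)) (hW.pow aemeasurable_const)
  simp only [Pi.mul_apply, hf, hg, ← hsplit] at this
  rwa [one_div_div, one_div] at this

lemma ENNReal.le_rpow_of_le_self_rpow_mul {I J : ℝ≥0∞} {m : ℝ} (hm : 1 < m) (hI : I ≠ ⊤)
    (h : I ≤ I ^ ((m - 1) / m) * J) : I ≤ J ^ m := by
  rcases eq_or_ne I 0 with rfl | hI0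
  · exact zero_le
  have hm0 : 0 < m := by linarith
  have hsplit : I ^ ((m - 1) / m) * I ^ m⁻¹ = I := by
    rw [← ENNReal.rpow_add _ _ hI0 hI, show (m - 1) / m + m⁻¹ = 1 by field_simp; ring,
      ENNReal.rpow_one]
  have hroot : I ^ m⁻¹ ≤ J := by
    refine (ENNReal.mul_le_mul_iff_right ?_ ?_).1 (hsplit.le.trans h)
    · exact (ENNReal.rpow_pos (pos_iff_ne_zero.2 hI0) hI).ne'
    · exact ENNReal.rpow_ne_top_of_nonneg (by positivity) hI
  calc I = (I ^ m⁻¹) ^ m := by rw [← ENNReal.rpow_mul, inv_mul_cancel₀ hm0.ne', ENNReal.rpow_one]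
    _ ≤ J ^ m := by gcongr

-- Tonelli moves the Hardy operator onto `W R^{m-1}`, Hölder bounds the result by `I^{(m-1)/m} J`,
-- and `I < ∞` lets us cancel.
lemma lintegral_mul_rpow_le_of_le_lintegral_Ioo {ψ W R : ℝ → ℝ≥0∞}
    (hψ : AEMeasurable ψ (volume.restrict (Ioi 0)))
    (hW : AEMeasurable W (volume.restrict (Ioi 0)))
    (hR : AEMeasurable R (volume.restrict (Ioi 0))) {m : ℝ} (hm : 1 ≤ m)
    (hRψ : ∀ x ∈ Ioi 0, R x ≤ ∫⁻ t in Ioo 0 x, ψ t)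
    (hI : ∫⁻ x in Ioi 0, W x * R x ^ m ≠ ⊤) :
    ∫⁻ x in Ioi 0, W x * R x ^ m ≤ (∫⁻ t in Ioi 0, ψ t * (∫⁻ x in Ioi t, W x) ^ m⁻¹) ^ m := by
  set I := ∫⁻ x in Ioi 0, W x * R x ^ m
  have hdual : I ≤ ∫⁻ t in Ioi 0, ψ t * ∫⁻ x in Ioi t, W x * R x ^ (m - 1) := by
    rw [← lintegral_Ioi_mul_lintegral_Ioo_eq (V := fun x => W x * R x ^ (m - 1)) hψ
      (hW.mul (hR.pow aemeasurable_const))]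
    refine setLIntegral_mono' measurableSet_Ioi fun x hx => ?_
    calc W x * R x ^ m = W x * R x ^ (m - 1) * R x := by
          conv_lhs => rw [← sub_add_cancel m 1]
          rw [ENNReal.rpow_add_of_nonneg _ _ (by linarith) zero_le_one, ENNReal.rpow_one, mul_assoc]
      _ ≤ _ := by gcongr; exact hRψ x hx
  rcases hm.eq_or_lt with rfl | hm
  · simpa using hdual
  have hinner : ∀ t ∈ Ioi (0 : ℝ), ∫⁻ x in Ioi t, W x * R x ^ (m - 1)
      ≤ I ^ ((m - 1) / m) * (∫⁻ x in Ioi t, W x) ^ m⁻¹ := by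
    intro t ht
    have hsub : Ioi t ⊆ Ioi (0 : ℝ) := Ioi_subset_Ioi (le_of_lt ht)
    refine (lintegral_mul_rpow_sub_one_le _ (hW.mono_measure (Measure.restrict_mono hsub le_rfl))
      (hR.mono_measure (Measure.restrict_mono hsub le_rfl)) hm).trans ?_
    gcongr
    exact lintegral_mono_set hsub
  refine ENNReal.le_rpow_of_le_self_rpow_mul hm hI (hdual.trans ?_)
  calc ∫⁻ t in Ioi 0, ψ t * ∫⁻ x in Ioi t, W x * R x ^ (m - 1)
      ≤ ∫⁻ t in Ioi 0, I ^ ((m - 1) / m) * (ψ t * (∫⁻ x in Ioi t, W x) ^ m⁻¹) := by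
        refine setLIntegral_mono' measurableSet_Ioi fun t ht => ?_
        rw [mul_left_comm]
        gcongr
        exact hinner t ht
    _ = I ^ ((m - 1) / m) * ∫⁻ t in Ioi 0, ψ t * (∫⁻ x in Ioi t, W x) ^ m⁻¹ :=
        lintegral_const_mul' _ _ (ENNReal.rpow_ne_top_of_nonneg (by positivity) hI)

lemma ENNReal.iSup_mul_iSup_of_monotone {f g : ℕ → ℝ≥0∞} (hf : Monotone f) (hg : Monotone g) :
    (⨆ n, f n) * ⨆ n, g n = ⨆ n, f n * g n := by
  refine le_antisymm ?_ ENNReal.iSup_mul_le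
  rw [ENNReal.iSup_mul]
  refine iSup_le fun i => ?_
  rw [ENNReal.mul_iSup]
  exact iSup_le fun j => le_iSup_of_le (max i j)
    (mul_le_mul' (hf (le_max_left i j)) (hg (le_max_right i j)))

lemma ENNReal.iSup_rpow {f : ℕ → ℝ≥0∞} {m : ℝ} (hm : 0 < m) :
    (⨆ n, f n) ^ m = ⨆ n, f n ^ m :=
  Monotone.map_iSup_of_continuousAt (f := fun z : ℝ≥0∞ => z ^ m)
    (ENNReal.continuous_rpow_const.continuousAt) (ENNReal.monotone_rpow_of_nonneg hm.le)
    (ENNReal.zero_rpow_of_pos hm)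

-- These truncations make the left side of `lintegral_mul_rpow_le_of_le_lintegral_Ioo` finite;
-- monotone convergence then removes them.
noncomputable def truncateIoc (f : ℝ → ℝ≥0∞) (n : ℕ) : ℝ → ℝ≥0∞ :=
  (Ioc 0 (n : ℝ)).indicator fun x => min (f x) n

lemma truncateIoc_le (f : ℝ → ℝ≥0∞) (n : ℕ) (x : ℝ) : truncateIoc f n x ≤ f x :=
  indicator_le_self' (fun _ _ => zero_le) x |>.trans (min_le_left _ _)

lemma truncateIoc_le_indicator (f : ℝ → ℝ≥0∞) (n : ℕ) (x : ℝ) :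
    truncateIoc f n x ≤ (Ioc 0 (n : ℝ)).indicator (fun _ => (n : ℝ≥0∞)) x :=
  indicator_le_indicator (min_le_right _ _)

lemma monotone_truncateIoc (f : ℝ → ℝ≥0∞) (x : ℝ) : Monotone fun n => truncateIoc f n x := by
  intro i j hij
  refine indicator_le_indicator_of_subset ?_ (fun _ => zero_le) x |>.trans
    (indicator_le_indicator (min_le_min_left _ (by exact_mod_cast hij)))
  exact Ioc_subset_Ioc_right (by exact_mod_cast hij)

lemma iSup_truncateIoc (f : ℝ → ℝ≥0∞) {x : ℝ} (hx : 0 < x) : ⨆ n, truncateIoc f n x = f x := by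
  refine le_antisymm (iSup_le fun n => truncateIoc_le f n x) ?_
  obtain ⟨k, hk⟩ := exists_nat_ge x
  calc f x = ⨆ n : ℕ, min (f x) n := by rw [← inf_iSup_eq, ENNReal.iSup_natCast, inf_top_eq]
    _ ≤ ⨆ n, truncateIoc f n x := iSup_mono' fun n => ⟨n + k, by
        have hmem : x ∈ Ioc 0 ((n + k : ℕ) : ℝ) :=
          ⟨hx, hk.trans (by exact_mod_cast k.le_add_left n)⟩
        rw [truncateIoc, indicator_of_mem hmem]
        exact min_le_min_left _ (by exact_mod_cast n.le_add_right k)⟩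

lemma AEMeasurable.truncateIoc {f : ℝ → ℝ≥0∞} {μ : Measure ℝ} (hf : AEMeasurable f μ) (n : ℕ) :
    AEMeasurable (truncateIoc f n) μ :=
  (hf.min aemeasurable_const).indicator measurableSet_Ioc

lemma lintegral_truncateIoc_mul_rpow_ne_top (W R : ℝ → ℝ≥0∞) (n : ℕ) {m : ℝ} (hm : 0 ≤ m) :
    ∫⁻ x in Ioi 0, truncateIoc W n x * truncateIoc R n x ^ m ≠ ⊤ := by
  have hbound : ∀ x, truncateIoc W n x * truncateIoc R n x ^ m
      ≤ (Ioc 0 (n : ℝ)).indicator (fun _ => (n : ℝ≥0∞) * (n : ℝ≥0∞) ^ m) x := by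
    intro x
    by_cases hx : x ∈ Ioc 0 (n : ℝ)
    · simp only [truncateIoc, indicator_of_mem hx]
      gcongr <;> exact min_le_right _ _
    · simp [truncateIoc, indicator_of_notMem hx]
  refine ne_top_of_le_ne_top ?_ ((setLIntegral_le_lintegral _ _).trans (lintegral_mono hbound))
  rw [lintegral_indicator_const measurableSet_Ioc, Real.volume_Ioc]
  exact ENNReal.mul_ne_top (ENNReal.mul_ne_top (by simp)
    (ENNReal.rpow_ne_top_of_nonneg hm (by simp))) ENNReal.ofReal_ne_top

theorem lintegral_mul_lintegral_Ioo_rpow_le {ψ W : ℝ → ℝ≥0∞}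
    (hψ : AEMeasurable ψ (volume.restrict (Ioi 0)))
    (hW : AEMeasurable W (volume.restrict (Ioi 0))) {m : ℝ} (hm : 1 ≤ m) :
    ∫⁻ x in Ioi 0, W x * (∫⁻ t in Ioo 0 x, ψ t) ^ m
      ≤ (∫⁻ t in Ioi 0, ψ t * (∫⁻ x in Ioi t, W x) ^ m⁻¹) ^ m := by
  set Q : ℝ → ℝ≥0∞ := fun x => ∫⁻ t in Ioo 0 x, ψ t
  have hQ : Measurable Q :=
    Monotone.measurable fun a b hab => lintegral_mono_set (Ioo_subset_Ioo_right hab)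
  have hm0 : 0 < m := by linarith
  have hsup : ∀ x ∈ Ioi (0 : ℝ),
      W x * Q x ^ m = ⨆ n, truncateIoc W n x * truncateIoc Q n x ^ m := by
    intro x hx
    rw [← iSup_truncateIoc W hx, ← iSup_truncateIoc Q hx, ENNReal.iSup_rpow hm0,
      ENNReal.iSup_mul_iSup_of_monotone (monotone_truncateIoc W x)
        fun i j hij => ENNReal.rpow_le_rpow (monotone_truncateIoc Q x hij) hm0.le]
  rw [setLIntegral_congr_fun measurableSet_Ioi hsup,
    lintegral_iSup' (f := fun n x => truncateIoc W n x * truncateIoc Q n x ^ m)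
    (fun n => (hW.truncateIoc n).mul ((hQ.aemeasurable.truncateIoc n).pow aemeasurable_const))
    (ae_of_all _ fun x i j hij => mul_le_mul' (monotone_truncateIoc W x hij)
      (ENNReal.rpow_le_rpow (monotone_truncateIoc Q x hij) hm0.le))]
  refine iSup_le fun n => (lintegral_mul_rpow_le_of_le_lintegral_Ioo hψ (hW.truncateIoc n)
    (hQ.aemeasurable.truncateIoc n) hm (fun x _ => truncateIoc_le Q n x)
    (lintegral_truncateIoc_mul_rpow_ne_top W Q n hm0.le)).trans ?_
  gcongr with t
  exact truncateIoc_le W n _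

theorem hardy_inequality_of_pointwise_bounds {p q : ℝ} (hp : 0 < p) (hpq : p ≤ q)
    {f g ψ W : ℝ → ℝ≥0∞} (hψ : AEMeasurable ψ (volume.restrict (Ioi 0)))
    (hW : AEMeasurable W (volume.restrict (Ioi 0)))
    (hf : ∀ x ∈ Ioi 0, f x ^ q ≤ W x * (∫⁻ t in Ioo 0 x, ψ t) ^ (q / p))
    (hg : ∀ t ∈ Ioi 0, ψ t * (∫⁻ x in Ioi t, W x) ^ (p / q) ≤ g t ^ p) :
    (∫⁻ x in Ioi 0, f x ^ q) ^ (1 / q) ≤ (∫⁻ t in Ioi 0, g t ^ p) ^ (1 / p) := by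
  have hq : 0 < q := hp.trans_le hpq
  calc (∫⁻ x in Ioi 0, f x ^ q) ^ (1 / q)
      ≤ (∫⁻ x in Ioi 0, W x * (∫⁻ t in Ioo 0 x, ψ t) ^ (q / p)) ^ (1 / q) :=
        ENNReal.rpow_le_rpow (setLIntegral_mono' measurableSet_Ioi hf) (by positivity)
    _ ≤ ((∫⁻ t in Ioi 0, ψ t * (∫⁻ x in Ioi t, W x) ^ (q / p)⁻¹) ^ (q / p)) ^ (1 / q) :=
        ENNReal.rpow_le_rpow (lintegral_mul_lintegral_Ioo_rpow_le hψ hW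
          ((one_le_div hp).2 hpq)) (by positivity)
    _ ≤ ((∫⁻ t in Ioi 0, g t ^ p) ^ (q / p)) ^ (1 / q) := by
        rw [inv_div]
        exact ENNReal.rpow_le_rpow (ENNReal.rpow_le_rpow
          (setLIntegral_mono' measurableSet_Ioi hg) (by positivity)) (by positivity)
    _ = (∫⁻ t in Ioi 0, g t ^ p) ^ (1 / p) := by
        rw [← ENNReal.rpow_mul]
        congr 1
        field_simp

lemma ofReal_rpow_mul_rpow_div_eq_of_rpow_one_div_eq {p p' q lam a w v : ℝ} {G : ℝ≥0∞}
    (hp : 0 ≤ p) (hlam : 0 ≤ lam) (ha : 0 ≤ a) (hv : 0 < v)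
    (hG : G ^ (1 / q) = ENNReal.ofReal (lam * w * v ^ (1 / p'))) :
    ENNReal.ofReal (a * v ^ (-(1 / p'))) ^ p * G ^ (p / q)
      = (ENNReal.ofReal lam * ENNReal.ofReal (a * w)) ^ p := by
  have hcancel : a * v ^ (-(1 / p')) * (lam * w * v ^ (1 / p')) = lam * (a * w) := by
    rw [show a * v ^ (-(1 / p')) * (lam * w * v ^ (1 / p'))
        = lam * (a * w) * (v ^ (-(1 / p')) * v ^ (1 / p')) by ring,
      ← Real.rpow_add hv, neg_add_cancel, Real.rpow_zero, mul_one]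
  rw [show p / q = 1 / q * p by ring, ENNReal.rpow_mul, hG, ← ENNReal.mul_rpow_of_nonneg _ _ hp,
    ← ENNReal.ofReal_mul (by positivity), hcancel, ENNReal.ofReal_mul hlam]

theorem hardy_inequality_of_nonlinear_ode_solution_general
    (p q p' lam : ℝ) (hp : 1 < p) (hpq : p ≤ q) (hp' : p' = p / (p - 1))
    (hlam : 0 < lam)
    (ω₁ ω₂ : ℝ → ℝ)
    (hω₂ : Measurable ω₂)
    (y y' : ℝ → ℝ)
    (hy : ∀ t ∈ Set.Ioi (0 : ℝ), 0 < y t)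
    (hy' : ∀ t ∈ Set.Ioi (0 : ℝ), 0 < y' t)
    (hyderiv : ∀ t ∈ Set.Ioi (0 : ℝ), HasDerivAt y (y' t) t)
    (hode : ∀ t ∈ Set.Ioi (0 : ℝ),
      (∫⁻ x in Set.Ioi t, ENNReal.ofReal (ω₂ x * y x ^ (1 / p')) ^ q) ^ (1 / q)
        = ENNReal.ofReal (lam * ω₁ t * y' t ^ (1 / p'))) :
    ∀ u u' : ℝ → ℝ,
      (∀ t ∈ Set.Ioi (0 : ℝ), HasDerivAt u (u' t) t) →
      (∀ a b : ℝ, 0 < a → a < b → u b - u a = ∫ t in Set.Ioo a b, u' t) →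
      Filter.Tendsto u (nhdsWithin 0 (Set.Ioi (0 : ℝ))) (nhds 0) →
      (∫⁻ x in Set.Ioi (0 : ℝ), ENNReal.ofReal (|u x| * ω₂ x) ^ q) ^ (1 / q)
        ≤ ENNReal.ofReal lam *
          (∫⁻ x in Set.Ioi (0 : ℝ), ENNReal.ofReal (|u' x| * ω₁ x) ^ p) ^ (1 / p) := by
  intro u u' hu _ hu0
  have hpp' : p.HolderConjugate p' := (Real.holderConjugate_iff_eq_conjExponent hp).2 hp'
  have hp0 : 0 < p := hpp'.pos
  have hψ : AEMeasurable (fun t => ENNReal.ofReal (|u' t| * y' t ^ (-(1 / p'))) ^ p)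
      (volume.restrict (Ioi 0)) :=
    ((aemeasurable_of_hasDerivAt measurableSet_Ioi hu).abs.mul
      ((aemeasurable_of_hasDerivAt measurableSet_Ioi hyderiv).pow aemeasurable_const)
      ).ennreal_ofReal.pow aemeasurable_const
  have hW : AEMeasurable (fun x => ENNReal.ofReal (ω₂ x * y x ^ (1 / p')) ^ q)
      (volume.restrict (Ioi 0)) :=
    (hω₂.aemeasurable.mul ((ContinuousOn.aemeasurable (fun t ht =>
      (hyderiv t ht).continuousAt.continuousWithinAt) measurableSet_Ioi).pow aemeasurable_const)
      ).ennreal_ofReal.pow aemeasurable_const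
  calc _ ≤ (∫⁻ t in Ioi 0, (ENNReal.ofReal lam * ENNReal.ofReal (|u' t| * ω₁ t)) ^ p) ^ (1 / p) :=
        hardy_inequality_of_pointwise_bounds hp0 hpq hψ hW
          (fun x hx => ofReal_abs_mul_rpow_le_rpow_mul_lintegral_rpow hpp' (hp0.le.trans hpq)
            (ω₂ x) hx hu hu0 hyderiv hy hy')
          (fun t ht => (ofReal_rpow_mul_rpow_div_eq_of_rpow_one_div_eq hp0.le hlam.le
            (abs_nonneg _) (hy' t ht) (hode t ht)).le)
    _ = _ := by
        simp_rw [ENNReal.mul_rpow_of_nonneg _ _ hp0.le]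
        rw [lintegral_const_mul' _ _ (ENNReal.rpow_ne_top_of_nonneg hp0.le ENNReal.ofReal_ne_top),
          ENNReal.mul_rpow_of_nonneg _ _ (by positivity), ← ENNReal.rpow_mul,
          mul_one_div_cancel hp0.ne', ENNReal.rpow_one]

/-- Constant-exponent case of Lemma 1 of the paper: if the nonlinear
integro-differential equation
`(∫_t^∞ (ω₂ y^{1/p'})^q dx)^{1/q} = λ ω₁(t) (y'(t))^{1/p'}` has a positive,
increasing, locally absolutely continuous solution `y` on `(0,∞)`, then the
weighted norm inequality `‖u ω₂‖_q ≤ λ ‖u' ω₁‖_p` holds for all locally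
absolutely continuous `u` with `u(0⁺) = 0`. -/
theorem hardy_inequality_of_nonlinear_ode_solution
    (p q p' lam : ℝ) (hp : 1 < p) (hpq : p ≤ q) (hp' : p' = p / (p - 1))
    (hlam : 0 < lam)
    (ω₁ ω₂ : ℝ → ℝ)
    (hω₁ : Measurable ω₁) (hω₁0 : ∀ t, 0 ≤ ω₁ t)
    (hω₁pos : ∀ᵐ t ∂(volume.restrict (Set.Ioi (0 : ℝ))), 0 < ω₁ t)
    (hω₂ : Measurable ω₂) (hω₂0 : ∀ t, 0 ≤ ω₂ t)
    (hω₂pos : ∀ᵐ t ∂(volume.restrict (Set.Ioi (0 : ℝ))), 0 < ω₂ t)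
    (y y' : ℝ → ℝ)
    (hy : ∀ t ∈ Set.Ioi (0 : ℝ), 0 < y t)
    (hy' : ∀ t ∈ Set.Ioi (0 : ℝ), 0 < y' t)
    (hyderiv : ∀ t ∈ Set.Ioi (0 : ℝ), HasDerivAt y (y' t) t)
    (hyFTC : ∀ a b : ℝ, 0 < a → a < b →
      y b - y a = ∫ t in Set.Ioo a b, y' t)
    (hode : ∀ t ∈ Set.Ioi (0 : ℝ),
      (∫⁻ x in Set.Ioi t, ENNReal.ofReal (ω₂ x * y x ^ (1 / p')) ^ q) ^ (1 / q)
        = ENNReal.ofReal (lam * ω₁ t * y' t ^ (1 / p'))) :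
    ∀ u u' : ℝ → ℝ,
      (∀ t ∈ Set.Ioi (0 : ℝ), HasDerivAt u (u' t) t) →
      (∀ a b : ℝ, 0 < a → a < b → u b - u a = ∫ t in Set.Ioo a b, u' t) →
      Filter.Tendsto u (nhdsWithin 0 (Set.Ioi (0 : ℝ))) (nhds 0) →
      (∫⁻ x in Set.Ioi (0 : ℝ), ENNReal.ofReal (|u x| * ω₂ x) ^ q) ^ (1 / q)
        ≤ ENNReal.ofReal lam *
          (∫⁻ x in Set.Ioi (0 : ℝ), ENNReal.ofReal (|u' x| * ω₁ x) ^ p) ^ (1 / p) :=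
  hardy_inequality_of_nonlinear_ode_solution_general p q p' lam hp hpq hp' hlam ω₁ ω₂ hω₂ y y' hy
    hy' hyderiv hode
end

section
/- Let 1 < p ≤ q < ∞ with p' = p/(p-1), let λ > 0, let ω₂ be a weight on (0,∞), and let ω₁ be a weight on (0,∞) that is differentiable on (0,∞). Suppose y₀ is positive and locally absolutely continuous on (0,∞) with y₀' > 0 locally absolutely continuous, satisfying L(t) := (∫_t^∞ (ω₂(x) · y₀(x)^{1/p'})^q dx)^{1/q} = λ · ω₁(t) · (y₀'(t))^{1/p'} for all t > 0. Define P(t) = −L'(t) and w(t) = y₀(t)/y₀'(t). Then P(t) ≥ 0 for all t > 0, and w satisfies the nonlinear differential equation w'(t) = 1 + p' · ω₁'(t) · w(t)/ω₁(t) + (p'/λ) · w(t)^{1/p' + 1} · P(t) / ( ω₁(t) · y₀(t)^{1/p'} ) for almost every t > 0. -/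
open MeasureTheory ENNReal Set

/-! The tail integral `t ↦ (∫_t^∞ (ω₂ y₀^{1/p'})^q)^{1/q}` is antitone, so `L`, which equals it
on `(0,∞)`, is antitone there and `P = -L'` is nonnegative. The equation for `w = y₀/y₀'` is
the quotient rule `w' = 1 - y₀ y₀''/y₀'^2` combined with the product rule for
`L = λ ω₁ y₀'^{1/p'}`, which lets one eliminate `y₀''` in favour of `P`; the identity
`w^{1/p'+1} y₀'^{1/p'} / y₀^{1/p'} = w` does the rest. -/

lemma antitone_rpow_setLIntegral_Ioi (f : ℝ → ℝ≥0∞) {r : ℝ} (hr : 0 ≤ r) :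
    Antitone fun t => (∫⁻ x in Ioi t, f x) ^ r :=
  fun _ _ hst => ENNReal.rpow_le_rpow (lintegral_mono_set (Ioi_subset_Ioi hst)) hr

lemma AntitoneOn.of_ofReal_eq {L : ℝ → ℝ} {F : ℝ → ℝ≥0∞} {s : Set ℝ} (hF : AntitoneOn F s)
    (hL : ∀ t ∈ s, 0 ≤ L t) (h : ∀ t ∈ s, ENNReal.ofReal (L t) = F t) : AntitoneOn L s :=
  fun a ha b hb hab => (ENNReal.ofReal_le_ofReal_iff (hL a ha)).1 <| by
    rw [h a ha, h b hb]; exact hF ha hb hab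

lemma riccati_identity {p' lam ω ω' a b c : ℝ} (hp' : p' ≠ 0) (hlam : lam ≠ 0) (hω : ω ≠ 0)
    (ha : 0 < a) (hb : 0 < b) :
    (b * b - a * c) / b ^ 2 = 1 + p' * ω' * (a / b) / ω +
      (p' / lam) * ((a / b) ^ (1 / p' + 1) *
        -(lam * ω' * b ^ (1 / p') + lam * ω * (c * (1 / p') * b ^ (1 / p' - 1)))) /
        (ω * a ^ (1 / p')) := by
  have hpow : (a / b) ^ (1 / p' + 1) = a ^ (1 / p') * a / (b ^ (1 / p') * b) := by
    rw [Real.div_rpow ha.le hb.le, Real.rpow_add_one ha.ne', Real.rpow_add_one hb.ne']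
  rw [hpow, Real.rpow_sub_one hb.ne']
  field_simp
  ring

theorem riccati_substitution_lemma_two_general
    (p q p' lam : ℝ) (hp : 1 < p) (hpq : p ≤ q) (hp' : p' = p / (p - 1))
    (hlam : 0 < lam)
    (ω₁ ω₂ ω₁' : ℝ → ℝ)
    (hω₁0 : ∀ t, 0 ≤ ω₁ t)
    (hω₁pos : ∀ᵐ t ∂(volume.restrict (Set.Ioi (0 : ℝ))), 0 < ω₁ t)
    (hω₁deriv : ∀ t ∈ Set.Ioi (0 : ℝ), HasDerivAt ω₁ (ω₁' t) t)
    (y₀ y₀' y₀'' : ℝ → ℝ)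
    (hy₀ : ∀ t ∈ Set.Ioi (0 : ℝ), 0 < y₀ t)
    (hy₀' : ∀ t ∈ Set.Ioi (0 : ℝ), 0 < y₀' t)
    (hy₀deriv : ∀ t ∈ Set.Ioi (0 : ℝ), HasDerivAt y₀ (y₀' t) t)
    (hy₀''ae : ∀ᵐ t ∂(volume.restrict (Set.Ioi (0 : ℝ))),
      HasDerivAt y₀' (y₀'' t) t)
    (L L' P w w' : ℝ → ℝ)
    (hode : ∀ t ∈ Set.Ioi (0 : ℝ),
      (∫⁻ x in Set.Ioi t, ENNReal.ofReal (ω₂ x * y₀ x ^ (1 / p')) ^ q) ^ (1 / q)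
        = ENNReal.ofReal (lam * ω₁ t * y₀' t ^ (1 / p')))
    (hLdef : ∀ t ∈ Set.Ioi (0 : ℝ), L t = lam * ω₁ t * y₀' t ^ (1 / p'))
    (hL' : ∀ t ∈ Set.Ioi (0 : ℝ), HasDerivAt L (L' t) t)
    (hP : ∀ t, P t = -L' t)
    (hwdef : ∀ t, w t = y₀ t / y₀' t)
    (hw' : ∀ᵐ t ∂(volume.restrict (Set.Ioi (0 : ℝ))), HasDerivAt w (w' t) t) :
    (∀ t ∈ Set.Ioi (0 : ℝ), 0 ≤ P t) ∧
    (∀ᵐ t ∂(volume.restrict (Set.Ioi (0 : ℝ))),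
      w' t = 1 + p' * ω₁' t * w t / ω₁ t +
        (p' / lam) * (w t ^ (1 / p' + 1) * P t) / (ω₁ t * y₀ t ^ (1 / p'))) := by
  have hq : 0 < q := by linarith
  have hp'0 : p' ≠ 0 := by rw [hp']; exact (div_pos (by linarith) (by linarith)).ne'
  have hL_nonneg : ∀ t ∈ Ioi (0 : ℝ), 0 ≤ L t := fun t ht => by
    rw [hLdef t ht]
    exact mul_nonneg (mul_nonneg hlam.le (hω₁0 t)) (Real.rpow_nonneg (hy₀' t ht).le _)
  have hanti : AntitoneOn L (Ioi 0) :=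
    ((antitone_rpow_setLIntegral_Ioi _ (one_div_nonneg.2 hq.le)).antitoneOn _).of_ofReal_eq
      hL_nonneg fun t ht => by rw [hLdef t ht, ← hode t ht]
  refine ⟨fun t ht => ?_, ?_⟩
  · rw [hP, neg_nonneg]
    exact (hL' t ht).hasDerivWithinAt.nonpos_of_antitoneOn (isOpen_Ioi.preperfect t ht) hanti
  filter_upwards [hy₀''ae, hw', hω₁pos, ae_restrict_mem measurableSet_Ioi]
    with t hy₀'' hw't hω₁t ht
  have hw't_eq : w' t = (y₀' t * y₀' t - y₀ t * y₀'' t) / y₀' t ^ 2 :=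
    hw't.unique <| (funext hwdef ▸ (hy₀deriv t ht).div hy₀'' (hy₀' t ht).ne')
  have hL't_eq : L' t = lam * ω₁' t * y₀' t ^ (1 / p') +
      lam * ω₁ t * (y₀'' t * (1 / p') * y₀' t ^ (1 / p' - 1)) := by
    refine (hL' t ht).unique <| (((hω₁deriv t ht).const_mul lam).mul
      (hy₀''.rpow_const (Or.inl (hy₀' t ht).ne'))).congr_of_eventuallyEq ?_
    filter_upwards [Ioi_mem_nhds ht] with x hx using hLdef x hx
  rw [hw't_eq, hP, hL't_eq, hwdef]
  exact riccati_identity hp'0 hlam.ne' hω₁t.ne' (hy₀ t ht) (hy₀' t ht)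

/-- Constant-exponent case of equation (2.10) in the proof of Lemma 2 of the
paper: if `y₀` is a positive solution of
`L(t) = (∫_t^∞ (ω₂ y₀^{1/p'})^q)^{1/q} = λ ω₁(t)(y₀'(t))^{1/p'}` with `y₀'` positive
and locally absolutely continuous, then `P = -L'` is nonnegative and
`w = y₀/y₀'` satisfies the Riccati-type equation
`w' = 1 + p' ω₁' w/ω₁ + (p'/λ) w^{1/p'+1} P/(ω₁ y₀^{1/p'})` a.e. on `(0,∞)`. -/
theorem riccati_substitution_lemma_two
    (p q p' lam : ℝ) (hp : 1 < p) (hpq : p ≤ q) (hp' : p' = p / (p - 1))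
    (hlam : 0 < lam)
    (ω₁ ω₂ ω₁' : ℝ → ℝ)
    (hω₁ : Measurable ω₁) (hω₁0 : ∀ t, 0 ≤ ω₁ t)
    (hω₁pos : ∀ᵐ t ∂(volume.restrict (Set.Ioi (0 : ℝ))), 0 < ω₁ t)
    (hω₁deriv : ∀ t ∈ Set.Ioi (0 : ℝ), HasDerivAt ω₁ (ω₁' t) t)
    (hω₂ : Measurable ω₂) (hω₂0 : ∀ t, 0 ≤ ω₂ t)
    (hω₂pos : ∀ᵐ t ∂(volume.restrict (Set.Ioi (0 : ℝ))), 0 < ω₂ t)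
    (y₀ y₀' y₀'' : ℝ → ℝ)
    (hy₀ : ∀ t ∈ Set.Ioi (0 : ℝ), 0 < y₀ t)
    (hy₀' : ∀ t ∈ Set.Ioi (0 : ℝ), 0 < y₀' t)
    (hy₀deriv : ∀ t ∈ Set.Ioi (0 : ℝ), HasDerivAt y₀ (y₀' t) t)
    (hy₀FTC : ∀ a b : ℝ, 0 < a → a < b →
      y₀ b - y₀ a = ∫ t in Set.Ioo a b, y₀' t)
    (hy₀''ae : ∀ᵐ t ∂(volume.restrict (Set.Ioi (0 : ℝ))),
      HasDerivAt y₀' (y₀'' t) t)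
    (hy₀'FTC : ∀ a b : ℝ, 0 < a → a < b →
      y₀' b - y₀' a = ∫ t in Set.Ioo a b, y₀'' t)
    (L L' P w w' : ℝ → ℝ)
    (hode : ∀ t ∈ Set.Ioi (0 : ℝ),
      (∫⁻ x in Set.Ioi t, ENNReal.ofReal (ω₂ x * y₀ x ^ (1 / p')) ^ q) ^ (1 / q)
        = ENNReal.ofReal (lam * ω₁ t * y₀' t ^ (1 / p')))
    (hLdef : ∀ t ∈ Set.Ioi (0 : ℝ), L t = lam * ω₁ t * y₀' t ^ (1 / p'))
    (hL' : ∀ t ∈ Set.Ioi (0 : ℝ), HasDerivAt L (L' t) t)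
    (hP : ∀ t, P t = -L' t)
    (hwdef : ∀ t, w t = y₀ t / y₀' t)
    (hw' : ∀ᵐ t ∂(volume.restrict (Set.Ioi (0 : ℝ))), HasDerivAt w (w' t) t) :
    (∀ t ∈ Set.Ioi (0 : ℝ), 0 ≤ P t) ∧
    (∀ᵐ t ∂(volume.restrict (Set.Ioi (0 : ℝ))),
      w' t = 1 + p' * ω₁' t * w t / ω₁ t +
        (p' / lam) * (w t ^ (1 / p' + 1) * P t) / (ω₁ t * y₀ t ^ (1 / p'))) :=
  riccati_substitution_lemma_two_general p q p' lam hp hpq hp' hlam ω₁ ω₂ ω₁' hω₁0 hω₁pos hω₁deriv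
    y₀ y₀' y₀'' hy₀ hy₀' hy₀deriv hy₀''ae L L' P w w' hode hLdef hL' hP hwdef hw'
end
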